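/- arXiv:1602.04577 — 9 statements merged into one kernel-verified Lean document; each statement's English description precedes it below -/
import Mathlib

section
/- Let α ∈ (0,1) ∪ (1,∞), and let F : ℝ → ℝ be any function satisfying F(H(v_2(p))) = ‖v_2(p)‖_α for every p ∈ [0, 1/2]. Then F is strictly concave on the interval [0, ln 2]. -/
open Real

/-- Shannon entropy (natural log, with `0 * log 0 = 0` since `Real.log 0 = 0`). -/
noncomputable def shannonEntropy {n : ℕ} (p : Fin n → ℝ) : ℝ :=
  -∑ i, p i * Real.log (p i)

/-- ℓ_α-norm of a vector (real power). -/
noncomputable def lNorm {n : ℕ} (α : ℝ) (p : Fin n → ℝ) : ℝ :=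
  (∑ i, p i ^ α) ^ (1 / α)

/-- `p` is an `n`-ary probability vector. -/
def IsProbVec {n : ℕ} (p : Fin n → ℝ) : Prop :=
  (∀ i, 0 ≤ p i) ∧ ∑ i, p i = 1

/-- The vector `v_n(q)`: first entry `1 - (n-1)q`, the other `n-1` entries equal `q`. -/
noncomputable def vVec (n : ℕ) (q : ℝ) : Fin n → ℝ :=
  fun i => if (i : ℕ) = 0 then 1 - ((n : ℝ) - 1) * q else q

/-- The vector `w_n(r)`: first `⌊1/r⌋` entries equal `r`, the next entry is
`1 - ⌊1/r⌋·r`, the remaining entries are `0`. -/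
noncomputable def wVec (n : ℕ) (r : ℝ) : Fin n → ℝ :=
  fun i => if (i : ℕ) < ⌊1 / r⌋₊ then r
           else if (i : ℕ) = ⌊1 / r⌋₊ then 1 - (⌊1 / r⌋₊ : ℝ) * r
           else 0

/-!
Parametrize the curve `(H(v₂(p)), ‖v₂(p)‖_α)` by `p ∈ [0, 1/2]`. Since `H(v₂(·))` is strictly
increasing there, Cauchy's mean value theorem writes every secant slope of `F` on `[0, ln 2]` as
`N'(c) / H'(c)` at an intermediate parameter `c`, where `N(p) = ‖v₂(p)‖_α`; so `F` is strictly
concave once this ratio is strictly decreasing in `p`. With `L = ln((1 - p)/p) = H'(p)`, the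
derivative of `N' / H'` is a positive factor times
`φ(L) = (α - 1) L + (1 + e^{αL}) (e^L - e^{αL}) / (e^{αL} (1 + e^L))`. Finally `φ(0) = 0` and
`φ'(L) = -2 e^L ((1 - α)(cosh L - cosh αL) + α (cosh((1 - α)L) - 1)) / (1 + e^L)²`,
which is negative for `L > 0` because `cosh` increases with `|x|`.
-/

open Set

theorem StrictAntiOn.strictConcaveOn_of_comp_eq {F h N h' N' : ℝ → ℝ} {a b : ℝ}
    (hab : a ≤ b)
    (hanti : StrictAntiOn (fun x ↦ N' x / h' x) (Ioo a b))
    (hh : ContinuousOn h (Icc a b)) (hN : ContinuousOn N (Icc a b))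
    (hhd : ∀ x ∈ Ioo a b, HasDerivAt h (h' x) x)
    (hNd : ∀ x ∈ Ioo a b, HasDerivAt N (N' x) x)
    (hpos : ∀ x ∈ Ioo a b, 0 < h' x) (hF : ∀ p ∈ Icc a b, F (h p) = N p) :
    StrictConcaveOn ℝ (Icc (h a) (h b)) F := by
  have hmono : StrictMonoOn h (Icc a b) :=
    strictMonoOn_of_hasDerivWithinAt_pos (convex_Icc a b) hh
      (fun x hx ↦ by rw [interior_Icc] at hx ⊢; exact (hhd x hx).hasDerivWithinAt)
      (fun x hx ↦ hpos x (by rwa [interior_Icc] at hx))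
  have hsurj : ∀ x ∈ Icc (h a) (h b), ∃ p ∈ Icc a b, h p = x :=
    fun x hx ↦ intermediate_value_Icc hab hh hx
  have hslope : ∀ p ∈ Icc a b, ∀ q ∈ Icc a b, p < q →
      ∃ c ∈ Ioo p q, (F (h q) - F (h p)) / (h q - h p) = N' c / h' c := by
    intro p hp q hq hpq
    have hsub : Icc p q ⊆ Icc a b := Icc_subset_Icc hp.1 hq.2
    have hIoo : Ioo p q ⊆ Ioo a b := Ioo_subset_Ioo hp.1 hq.2
    obtain ⟨c, hc, hcauchy⟩ := exists_ratio_hasDerivAt_eq_ratio_slope h h' hpq (hh.mono hsub)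
      (fun x hx ↦ hhd x (hIoo hx)) N N' (hN.mono hsub) (fun x hx ↦ hNd x (hIoo hx))
    refine ⟨c, hc, ?_⟩
    rw [hF p hp, hF q hq, div_eq_div_iff (sub_pos.2 (hmono hp hq hpq)).ne' (hpos c (hIoo hc)).ne']
    linarith
  refine strictConcaveOn_of_slope_strict_anti_adjacent (convex_Icc _ _) ?_
  intro x y z hx hz hxy hyz
  obtain ⟨p, hp, rfl⟩ := hsurj x hx
  obtain ⟨q, hq, rfl⟩ := hsurj y ⟨hx.1.trans hxy.le, hyz.le.trans hz.2⟩
  obtain ⟨r, hr, rfl⟩ := hsurj z hz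
  obtain ⟨c₁, hc₁, h₁⟩ := hslope p hp q hq ((hmono.lt_iff_lt hp hq).1 hxy)
  obtain ⟨c₂, hc₂, h₂⟩ := hslope q hq r hr ((hmono.lt_iff_lt hq hr).1 hyz)
  rw [h₁, h₂]
  exact hanti (Ioo_subset_Ioo hp.1 hq.2 hc₁) (Ioo_subset_Ioo hq.1 hr.2 hc₂) (hc₁.2.trans hc₂.1)

lemma cosh_combination_pos {α L : ℝ} (hα : 0 < α) (hα1 : α ≠ 1) (hL : 0 < L) :
    0 < (1 - α) * (cosh L - cosh (α * L)) + α * (cosh ((1 - α) * L) - 1) := by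
  have hcosh : 1 < cosh ((1 - α) * L) :=
    one_lt_cosh.2 (mul_ne_zero (sub_ne_zero.2 hα1.symm) hL.ne')
  have hsign : 0 ≤ (1 - α) * (cosh L - cosh (α * L)) := by
    rcases hα1.lt_or_gt with h | h
    · refine mul_nonneg (by linarith) (sub_nonneg.2 (cosh_le_cosh.2 ?_))
      rw [abs_of_pos hL, abs_of_pos (mul_pos hα hL)]; nlinarith
    · refine mul_nonneg_of_nonpos_of_nonpos (by linarith) (sub_nonpos.2 (cosh_le_cosh.2 ?_))
      rw [abs_of_pos hL, abs_of_pos (mul_pos hα hL)]; nlinarith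
  nlinarith

noncomputable def curvatureFactor (α L : ℝ) : ℝ :=
  (α - 1) * L + (1 + exp (α * L)) * (exp L - exp (α * L)) / (exp (α * L) * (1 + exp L))

lemma curvatureFactor_zero (α : ℝ) : curvatureFactor α 0 = 0 := by
  simp [curvatureFactor]

lemma hasDerivAt_curvatureFactor (α L : ℝ) :
    HasDerivAt (curvatureFactor α)
      (-2 * ((1 - α) * (cosh L - cosh (α * L)) + α * (cosh ((1 - α) * L) - 1)) * exp L
        / (1 + exp L) ^ 2) L := by
  have hu := hasDerivAt_exp L
  have hv : HasDerivAt (fun x ↦ exp (α * x)) (exp (α * L) * α) L :=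
    (hasDerivAt_exp _).comp L ((hasDerivAt_id L).const_mul α |>.congr_deriv (mul_one α))
  have := ((hasDerivAt_id L).const_mul (α - 1)).fun_add
    (((hv.const_add 1).fun_mul (hu.fun_sub hv)).fun_div (hv.fun_mul (hu.const_add 1))
      (by positivity))
  refine this.congr_deriv ?_
  rw [show (1 - α) * L = L - α * L by ring]
  simp only [cosh_eq, exp_neg, exp_sub]
  field_simp
  ring

lemma curvatureFactor_neg {α L : ℝ} (hα : 0 < α) (hα1 : α ≠ 1) (hL : 0 < L) :
    curvatureFactor α L < 0 := by
  have hanti : StrictAntiOn (curvatureFactor α) (Ici 0) :=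
    strictAntiOn_of_hasDerivWithinAt_neg (convex_Ici 0)
      (fun x _ ↦ (hasDerivAt_curvatureFactor α x).continuousAt.continuousWithinAt)
      (fun x _ ↦ (hasDerivAt_curvatureFactor α x).hasDerivWithinAt)
      fun x hx ↦ by
        rw [interior_Ici] at hx
        exact div_neg_of_neg_of_pos (mul_neg_of_neg_of_pos
          (by linarith [cosh_combination_pos hα hα1 hx]) (exp_pos x)) (by positivity)
  simpa [curvatureFactor_zero] using hanti self_mem_Ici hL.le hL

noncomputable def binNorm (α p : ℝ) : ℝ := ((1 - p) ^ α + p ^ α) ^ (1 / α)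

noncomputable def binNormDeriv (α p : ℝ) : ℝ :=
  ((1 - p) ^ α + p ^ α) ^ (1 / α - 1) * (p ^ (α - 1) - (1 - p) ^ (α - 1))

lemma shannonEntropy_vVec_two (p : ℝ) : shannonEntropy (vVec 2 p) = binEntropy p := by
  norm_num [shannonEntropy, vVec, binEntropy, Fin.sum_univ_two, log_inv]

lemma lNorm_vVec_two (α p : ℝ) : lNorm α (vVec 2 p) = binNorm α p := by
  norm_num [lNorm, vVec, binNorm, Fin.sum_univ_two]

variable {α p : ℝ}

lemma continuousOn_binNorm (hα : 0 < α) : ContinuousOn (binNorm α) (Icc 0 1) := by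
  intro p hp
  have hsum : (1 - p) ^ α + p ^ α ≠ 0 := by
    rcases hp.2.lt_or_eq with h | rfl
    · exact (add_pos_of_pos_of_nonneg (rpow_pos_of_pos (by linarith) α)
        (rpow_nonneg hp.1 α)).ne'
    · simp [zero_rpow hα.ne']
  have hpow : ∀ x : ℝ, ContinuousAt (fun y : ℝ ↦ y ^ α) x :=
    fun x ↦ continuousAt_rpow_const x α (Or.inr hα.le)
  exact (((hpow (1 - p)).comp (continuous_const.sub continuous_id).continuousAt).add
    (hpow p)).rpow_const (Or.inl hsum) |>.continuousWithinAt

lemma hasDerivAt_one_sub_rpow_add_rpow (hp : 0 < p) (hp1 : p < 1) :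
    HasDerivAt (fun x ↦ (1 - x) ^ α + x ^ α) (α * (p ^ (α - 1) - (1 - p) ^ (α - 1))) p := by
  have h1 : HasDerivAt (fun x : ℝ ↦ 1 - x) (-1) p := (hasDerivAt_id p).const_sub 1
  have := ((hasDerivAt_rpow_const (p := α) (Or.inl (sub_pos.2 hp1).ne')).comp p h1).add
    (hasDerivAt_rpow_const (p := α) (Or.inl hp.ne'))
  exact this.congr_deriv (by ring)

lemma hasDerivAt_binNorm (hα : α ≠ 0) (hp : 0 < p) (hp1 : p < 1) :
    HasDerivAt (binNorm α) (binNormDeriv α p) p := by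
  have hS : 0 < (1 - p) ^ α + p ^ α := by
    have := sub_pos.2 hp1
    positivity
  have := (hasDerivAt_rpow_const (p := 1 / α) (Or.inl hS.ne')).comp p
    (hasDerivAt_one_sub_rpow_add_rpow hp hp1)
  refine this.congr_deriv ?_
  rw [binNormDeriv]
  field_simp

lemma hasDerivAt_binNormDeriv (hα : α ≠ 0) (hp : 0 < p) (hp1 : p < 1) :
    HasDerivAt (binNormDeriv α)
      ((α - 1) * (((1 - p) ^ α + p ^ α) ^ (1 / α - 2) * (p ^ (α - 2) * (1 - p) ^ (α - 2))))
      p := by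
  have hq : 0 < 1 - p := sub_pos.2 hp1
  have hS : 0 < (1 - p) ^ α + p ^ α := by positivity
  have h1 : HasDerivAt (fun x : ℝ ↦ 1 - x) (-1) p := (hasDerivAt_id p).const_sub 1
  have := ((hasDerivAt_rpow_const (p := 1 / α - 1) (Or.inl hS.ne')).comp p
    (hasDerivAt_one_sub_rpow_add_rpow hp hp1)).fun_mul
    ((hasDerivAt_rpow_const (p := α - 1) (Or.inl hp.ne')).fun_sub
      ((hasDerivAt_rpow_const (p := α - 1) (Or.inl hq.ne')).comp p h1))
  refine this.congr_deriv ?_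
  simp only [Function.comp_apply, rpow_sub hp, rpow_sub hq, rpow_sub hS, rpow_one, rpow_two]
  field_simp
  ring

lemma hasDerivAt_log_one_sub_sub_log (hp : 0 < p) (hp1 : p < 1) :
    HasDerivAt (fun x ↦ log (1 - x) - log x) (-1 / (p * (1 - p))) p := by
  have hq : 0 < 1 - p := sub_pos.2 hp1
  have := ((hasDerivAt_log hq.ne').comp p ((hasDerivAt_id p).const_sub 1)).fun_sub
    (hasDerivAt_log hp.ne')
  refine this.congr_deriv ?_
  field_simp
  ring

lemma log_one_sub_sub_log_pos (hp : 0 < p) (hp2 : p < 1 / 2) : 0 < log (1 - p) - log p :=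
  sub_pos.2 (log_lt_log hp (by linarith))

lemma exp_log_one_sub_sub_log (hp : 0 < p) (hp1 : p < 1) :
    exp (log (1 - p) - log p) = (1 - p) / p := by
  rw [exp_sub, exp_log (sub_pos.2 hp1), exp_log hp]

lemma exp_mul_log_one_sub_sub_log (hp : 0 < p) (hp1 : p < 1) :
    exp (α * (log (1 - p) - log p)) = (1 - p) ^ α / p ^ α := by
  rw [rpow_def_of_pos (sub_pos.2 hp1), rpow_def_of_pos hp, ← exp_sub]
  ring_nf

lemma hasDerivAt_binNormDeriv_div (hα : α ≠ 0) (hp : 0 < p) (hp2 : p < 1 / 2) :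
    HasDerivAt (fun x ↦ binNormDeriv α x / (log (1 - x) - log x))
      (((1 - p) ^ α + p ^ α) ^ (1 / α - 2) * (p ^ (α - 2) * (1 - p) ^ (α - 2)) *
        curvatureFactor α (log (1 - p) - log p) / (log (1 - p) - log p) ^ 2) p := by
  have hp1 : p < 1 := by linarith
  have hq : 0 < 1 - p := sub_pos.2 hp1
  have hS : 0 < (1 - p) ^ α + p ^ α := by positivity
  have hL := log_one_sub_sub_log_pos hp hp2
  have := (hasDerivAt_binNormDeriv hα hp hp1).fun_div
    (hasDerivAt_log_one_sub_sub_log hp hp1) hL.ne'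
  refine this.congr_deriv ?_
  rw [curvatureFactor, exp_log_one_sub_sub_log hp hp1, exp_mul_log_one_sub_sub_log hp hp1,
    binNormDeriv]
  generalize log (1 - p) - log p = L at hL ⊢
  simp only [rpow_sub hp, rpow_sub hq, rpow_sub hS, rpow_one, rpow_two]
  field_simp
  ring

lemma strictAntiOn_binNormDeriv_div (hα : 0 < α) (hα1 : α ≠ 1) :
    StrictAntiOn (fun x ↦ binNormDeriv α x / (log (1 - x) - log x)) (Ioo 0 (1 / 2)) := by
  have hderiv := fun x (hx : x ∈ Ioo (0 : ℝ) (1 / 2)) ↦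
    hasDerivAt_binNormDeriv_div hα.ne' hx.1 hx.2
  refine strictAntiOn_of_hasDerivWithinAt_neg (convex_Ioo 0 (1 / 2))
    (fun x hx ↦ (hderiv x hx).continuousAt.continuousWithinAt)
    (fun x hx ↦ (hderiv x (interior_subset hx)).hasDerivWithinAt) fun x hx ↦ ?_
  obtain ⟨hx0, hx2⟩ := interior_subset hx
  have hq : 0 < 1 - x := by linarith
  have hL := log_one_sub_sub_log_pos hx0 hx2
  have hW : 0 < ((1 - x) ^ α + x ^ α) ^ (1 / α - 2) * (x ^ (α - 2) * (1 - x) ^ (α - 2)) := by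
    positivity
  exact div_neg_of_neg_of_pos (mul_neg_of_pos_of_neg hW (curvatureFactor_neg hα hα1 hL))
    (by positivity)

theorem stmt4 (α : ℝ) (hα : α ∈ Set.Ioo (0 : ℝ) 1 ∪ Set.Ioi 1)
    (F : ℝ → ℝ)
    (hF : ∀ p ∈ Set.Icc (0 : ℝ) (1 / 2),
      F (shannonEntropy (vVec 2 p)) = lNorm α (vVec 2 p)) :
    StrictConcaveOn ℝ (Set.Icc 0 (Real.log 2)) F := by
  have hα0 : 0 < α := by rcases hα with h | h <;> [exact h.1; exact one_pos.trans h]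
  have hα1 : α ≠ 1 := by rcases hα with h | h <;> [exact h.2.ne; exact h.ne']
  have hFbin : ∀ p ∈ Icc (0 : ℝ) (1 / 2), F (binEntropy p) = binNorm α p := fun p hp ↦ by
    simpa only [shannonEntropy_vVec_two, lNorm_vVec_two] using hF p hp
  have hconcave := (strictAntiOn_binNormDeriv_div hα0 hα1).strictConcaveOn_of_comp_eq
    (by norm_num) binEntropy_continuous.continuousOn
    ((continuousOn_binNorm hα0).mono (Icc_subset_Icc_right (by norm_num)))
    (fun x hx ↦ hasDerivAt_binEntropy hx.1.ne' (by linarith [hx.2]))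
    (fun x hx ↦ hasDerivAt_binNorm hα0.ne' hx.1 (by linarith [hx.2]))
    (fun x hx ↦ log_one_sub_sub_log_pos hx.1 hx.2) hFbin
  rwa [binEntropy_zero, one_div, binEntropy_two_inv] at hconcave
end

section
/- Let n ≥ m ≥ 2 be integers and let α ∈ (0,1) ∪ (1,∞). Then every function F : ℝ → ℝ satisfying F(H_{w_n}(p)) = ‖w_n(p)‖_α for all p ∈ [1/m, 1/(m−1)] is strictly concave on the interval [ln(m−1), ln m]. -/
/-!
Write `k = m - 1`. For `z ∈ [0, 1]` the vector `w_n(1/(k + z))` has `k` entries `1/(k + z)`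
and one entry `z/(k + z)`, so `p ↦ (H(w_n(p)), ‖w_n(p)‖_α)` becomes a curve
`z ↦ (E(z), N(z))` with `E` strictly increasing from `ln k` to `ln (k + 1)`. By Cauchy's mean
value theorem `F` is strictly concave as soon as the slope
`N'/E' = (k + z^α)^(1/α - 1) (1 - z^(α-1)) / ln z` is strictly decreasing in `z`.
With `x = z^(α-1)` the sign of its derivative is that of
`z x (x - 1 - ln x) - k (x ln x - x + 1)`, which is negative because `k ≥ 1`, `z x = z^α < 1`,
and `2 (x - 1) ≤ (x + 1) ln x` for `x ≥ 1`, `x² - 1 ≤ 2 x ln x` for `x ≤ 1`.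
-/

open Real

open Set

theorem strictConcaveOn_of_comp_eq {e e' y r : ℝ → ℝ} {a b : ℝ} (hab : a ≤ b)
    (he : ContinuousOn e (Icc a b)) (hy : ContinuousOn y (Icc a b))
    (he' : ∀ t ∈ Ioo a b, HasDerivAt e (e' t) t) (he'_pos : ∀ t ∈ Ioo a b, 0 < e' t)
    (hy' : ∀ t ∈ Ioo a b, HasDerivAt y (r t * e' t) t) (hr : StrictAntiOn r (Ioo a b))
    {F : ℝ → ℝ} (hF : ∀ t ∈ Icc a b, F (e t) = y t) :
    StrictConcaveOn ℝ (Icc (e a) (e b)) F := by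
  have he_mono : StrictMonoOn e (Icc a b) :=
    strictMonoOn_of_hasDerivWithinAt_pos (convex_Icc a b) he
      (fun t ht => (he' t (by rwa [interior_Icc] at ht)).hasDerivWithinAt)
      (fun t ht => he'_pos t (by rwa [interior_Icc] at ht))
  have hslope : ∀ s ∈ Icc a b, ∀ t ∈ Icc a b, s < t →
      ∃ c ∈ Ioo s t, (y t - y s) / (e t - e s) = r c := by
    intro s hs t ht hst
    have hsub : Ioo s t ⊆ Ioo a b := Ioo_subset_Ioo hs.1 ht.2
    have hIcc : Icc s t ⊆ Icc a b := Icc_subset_Icc hs.1 ht.2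
    obtain ⟨c, hc, hmvt⟩ := exists_ratio_hasDerivAt_eq_ratio_slope e e' hst (he.mono hIcc)
      (fun c hc => he' c (hsub hc)) y (fun c => r c * e' c) (hy.mono hIcc)
      (fun c hc => hy' c (hsub hc))
    refine ⟨c, hc, ?_⟩
    rw [div_eq_iff (sub_ne_zero.2 (he_mono hs ht hst).ne')]
    exact mul_right_cancel₀ (he'_pos c (hsub hc)).ne' (by linarith)
  have hsurj : Icc (e a) (e b) ⊆ e '' Icc a b := intermediate_value_Icc hab he
  refine strictConcaveOn_iff_slope_strict_anti_adjacent.2 ⟨convex_Icc _ _, ?_⟩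
  intro u v w hu hw huv hvw
  obtain ⟨s, hs, rfl⟩ := hsurj hu
  obtain ⟨t, ht, rfl⟩ := hsurj ⟨hu.1.trans huv.le, hvw.le.trans hw.2⟩
  obtain ⟨t', ht', rfl⟩ := hsurj hw
  obtain ⟨c, hc, hc_eq⟩ := hslope s hs t ht ((he_mono.lt_iff_lt hs ht).1 huv)
  obtain ⟨c', hc', hc'_eq⟩ := hslope t ht t' ht' ((he_mono.lt_iff_lt ht ht').1 hvw)
  rw [hF s hs, hF t ht, hF t' ht', hc_eq, hc'_eq]
  exact hr ⟨hs.1.trans_lt hc.1, hc.2.trans_le ht.2⟩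
    ⟨ht.1.trans_lt hc'.1, hc'.2.trans_le ht'.2⟩
    (hc.2.trans hc'.1)

theorem sq_sub_one_le_two_mul_mul_log {x : ℝ} (hx0 : 0 < x) (hx1 : x ≤ 1) :
    x ^ 2 - 1 ≤ 2 * x * log x := by
  have h := sinh_le_self_iff.2 (log_nonpos hx0.le hx1)
  rw [sinh_log hx0] at h
  have : x * (x - x⁻¹) = x ^ 2 - 1 := by field_simp
  nlinarith

theorem two_mul_sub_one_le_add_one_mul_log {x : ℝ} (hx : 1 ≤ x) :
    2 * (x - 1) ≤ (x + 1) * log x := by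
  have hmono : MonotoneOn (fun x => (x + 1) * log x - 2 * (x - 1)) (Ici 1) := by
    refine monotoneOn_of_hasDerivWithinAt_nonneg (convex_Ici 1)
      (f' := fun x => log x + (x + 1) / x - 2) ?_ ?_ ?_
    · exact ContinuousOn.sub (ContinuousOn.mul (by fun_prop)
        (continuousOn_log.mono fun x hx => (zero_lt_one.trans_le hx).ne')) (by fun_prop)
    · intro x hx
      rw [interior_Ici] at hx
      have hx0 : x ≠ 0 := (zero_lt_one.trans hx).ne'
      exact ((((hasDerivAt_id' x).add_const 1).mul (hasDerivAt_log hx0)).sub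
        (((hasDerivAt_id' x).sub_const 1).const_mul 2)).hasDerivWithinAt.congr_deriv
          (by field_simp)
    · intro x hx
      rw [interior_Ici] at hx
      have hx0 : 0 < x := zero_lt_one.trans hx
      have h := log_le_sub_one_of_pos (inv_pos.2 hx0)
      rw [log_inv] at h
      have : (x + 1) / x = 1 + x⁻¹ := by field_simp
      linarith
  have := hmono (mem_Ici.2 le_rfl) hx hx
  simp only [log_one] at this
  linarith

theorem mul_sub_one_sub_log_lt_mul_log_sub_add_one {k z x : ℝ} (hk : 1 ≤ k)
    (hz1 : z < 1) (hx0 : 0 < x) (hx1 : x ≠ 1) (hzx : z * x < 1) :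
    z * x * (x - 1 - log x) < k * (x * log x - x + 1) := by
  have hB : 0 < x - 1 - log x := by linarith [log_lt_sub_one_of_pos hx0 hx1]
  rcases lt_or_gt_of_ne hx1 with hlt | hgt
  · have h := sq_sub_one_le_two_mul_mul_log hx0 hlt.le
    have hxB : 0 < x * (x - 1 - log x) := mul_pos hx0 hB
    nlinarith
  · have h := two_mul_sub_one_le_add_one_mul_log hgt.le
    nlinarith

noncomputable def entropyProfile (k z : ℝ) : ℝ := log (k + z) - z * log z / (k + z)

noncomputable def normProfile (k α z : ℝ) : ℝ := (k + z ^ α) ^ (1 / α) / (k + z)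

noncomputable def normEntropySlope (k α z : ℝ) : ℝ :=
  (k + z ^ α) ^ (1 / α - 1) * (1 - z ^ (α - 1)) / log z

section
variable {k α z : ℝ}

theorem entropyProfile_zero (k : ℝ) : entropyProfile k 0 = log k := by
  simp [entropyProfile]

theorem entropyProfile_one (k : ℝ) : entropyProfile k 1 = log (k + 1) := by
  simp [entropyProfile]

theorem continuousOn_entropyProfile (hk : 0 < k) :
    ContinuousOn (entropyProfile k) (Icc 0 1) := by
  have hpos : ∀ z ∈ Icc (0 : ℝ) 1, 0 < k + z := fun z hz => by linarith [hz.1]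
  refine ((continuousOn_log.comp (by fun_prop) fun z hz => (hpos z hz).ne').sub ?_)
  exact (continuous_mul_log.continuousOn).div (by fun_prop) fun z hz => (hpos z hz).ne'

theorem continuousOn_normProfile (hk : 0 < k) (hα : 0 < α) :
    ContinuousOn (normProfile k α) (Icc 0 1) := by
  have hpos : ∀ z ∈ Icc (0 : ℝ) 1, 0 < k + z := fun z hz => by linarith [hz.1]
  have hN : ∀ z ∈ Icc (0 : ℝ) 1, 0 < k + z ^ α := fun z hz => by
    linarith [rpow_nonneg hz.1 α]
  refine ContinuousOn.div ?_ (by fun_prop) fun z hz => (hpos z hz).ne'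
  refine ContinuousOn.rpow_const ?_ fun z hz => Or.inl (hN z hz).ne'
  exact continuousOn_const.add (continuous_rpow_const hα.le).continuousOn

theorem hasDerivAt_entropyProfile (hk : 0 < k) (hz : 0 < z) :
    HasDerivAt (entropyProfile k) (-(k * log z) / (k + z) ^ 2) z := by
  have hkz : k + z ≠ 0 := by positivity
  have h := (((hasDerivAt_id' z).const_add k).log hkz).sub
    ((hasDerivAt_mul_log hz.ne').div ((hasDerivAt_id' z).const_add k) hkz)
  exact h.congr_deriv (by field_simp; ring)

theorem hasDerivAt_normProfile (hk : 0 < k) (hα : α ≠ 0) (hz : 0 < z) (hz1 : z ≠ 1) :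
    HasDerivAt (normProfile k α) (normEntropySlope k α z * (-(k * log z) / (k + z) ^ 2)) z := by
  have hkz : k + z ≠ 0 := by positivity
  have hN : 0 < k + z ^ α := by positivity
  have hlog : log z ≠ 0 := log_ne_zero_of_pos_of_ne_one hz hz1
  have h := ((((hasDerivAt_rpow_const (Or.inl hz.ne')).const_add k).rpow_const
    (p := 1 / α) (Or.inl hN.ne')).div ((hasDerivAt_id' z).const_add k) hkz)
  refine h.congr_deriv ?_
  have hzα : z ^ α = z ^ (α - 1) * z := by rw [← rpow_add_one hz.ne', sub_add_cancel]
  have hNα : (k + z ^ α) ^ (1 / α) = (k + z ^ α) ^ (1 / α - 1) * (k + z ^ α) := by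
    rw [← rpow_add_one hN.ne', sub_add_cancel]
  rw [normEntropySlope, hNα, hzα]
  field_simp
  ring

theorem hasDerivAt_normEntropySlope (hk : 0 < k) (hα : α ≠ 0) (hz : 0 < z) (hz1 : z ≠ 1) :
    HasDerivAt (normEntropySlope k α)
      (-((k + z ^ α) ^ (1 / α - 1) * ((α - 1) * z ^ (α - 1) * (k + z) * log z
        + (k + z ^ α) * (1 - z ^ (α - 1)))) / (z * (k + z ^ α) * log z ^ 2)) z := by
  have hN : 0 < k + z ^ α := by positivity
  have hlog : log z ≠ 0 := log_ne_zero_of_pos_of_ne_one hz hz1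
  have h := ((((hasDerivAt_rpow_const (p := α) (Or.inl hz.ne')).const_add k).rpow_const
    (p := 1 / α - 1) (Or.inl hN.ne')).mul
    ((hasDerivAt_rpow_const (p := α - 1) (Or.inl hz.ne')).const_sub 1)).div
    (hasDerivAt_log hz.ne') hlog
  refine h.congr_deriv ?_
  have hzα : z ^ α = z ^ (α - 1) * z := by rw [← rpow_add_one hz.ne', sub_add_cancel]
  simp only [Pi.mul_apply]
  rw [rpow_sub_one hN.ne', rpow_sub_one hz.ne' (α - 1), hzα]
  field_simp
  ring

theorem strictAntiOn_normEntropySlope (hk : 1 ≤ k) (hα : 0 < α) (hα1 : α ≠ 1) :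
    StrictAntiOn (normEntropySlope k α) (Ioo 0 1) := by
  have hderiv := fun z (hz : z ∈ Ioo (0 : ℝ) 1) =>
    hasDerivAt_normEntropySlope (k := k) (by linarith) hα.ne' hz.1 hz.2.ne
  refine strictAntiOn_of_hasDerivWithinAt_neg (convex_Ioo 0 1)
    (fun z hz => (hderiv z hz).continuousAt.continuousWithinAt)
    (fun z hz => (hderiv z (by rwa [interior_Ioo] at hz)).hasDerivWithinAt) ?_
  intro z hz
  rw [interior_Ioo] at hz
  obtain ⟨hz0, hz1⟩ := hz
  have hN : 0 < k + z ^ α := by positivity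
  have hzα : z ^ α = z * z ^ (α - 1) := by
    rw [mul_comm, ← rpow_add_one hz0.ne', sub_add_cancel]
  have hlog_s : log (z ^ (α - 1)) = (α - 1) * log z := log_rpow hz0 _
  have hs1 : z ^ (α - 1) ≠ 1 := fun h => by
    rw [h, log_one, eq_comm] at hlog_s
    exact mul_ne_zero (sub_ne_zero.2 hα1) (log_neg hz0 hz1).ne hlog_s
  have hzs : z * z ^ (α - 1) < 1 := hzα ▸ rpow_lt_one hz0.le hz1 hα
  have hineq :=
    mul_sub_one_sub_log_lt_mul_log_sub_add_one hk hz1 (rpow_pos_of_pos hz0 _) hs1 hzs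
  rw [hlog_s] at hineq
  have hnum :
      0 < (α - 1) * z ^ (α - 1) * (k + z) * log z + (k + z ^ α) * (1 - z ^ (α - 1)) := by
    rw [hzα]; linarith
  exact div_neg_of_neg_of_pos (neg_neg_of_pos (mul_pos (rpow_pos_of_pos hN _) hnum))
    (mul_pos (mul_pos hz0 hN) (sq_pos_of_neg (log_neg hz0 hz1)))
end

theorem strictConcaveOn_of_comp_entropyProfile_eq {k α : ℝ} (hk : 1 ≤ k) (hα : 0 < α)
    (hα1 : α ≠ 1) {F : ℝ → ℝ}
    (hF : ∀ z ∈ Icc 0 1, F (entropyProfile k z) = normProfile k α z) :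
    StrictConcaveOn ℝ (Icc (log k) (log (k + 1))) F := by
  have hk0 : 0 < k := by linarith
  have h := strictConcaveOn_of_comp_eq zero_le_one (continuousOn_entropyProfile hk0)
    (continuousOn_normProfile hk0 hα) (fun z hz => hasDerivAt_entropyProfile hk0 hz.1)
    (fun z hz => div_pos (neg_pos.2 (mul_neg_of_pos_of_neg hk0 (log_neg hz.1 hz.2)))
      (pow_pos (by linarith [hz.1]) 2))
    (fun z hz => hasDerivAt_normProfile hk0 hα.ne' hz.1 hz.2.ne)
    (strictAntiOn_normEntropySlope hk hα hα1) hF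
  rwa [entropyProfile_zero, entropyProfile_one] at h

theorem sum_ite_lt_ite_eq {k n : ℕ} (hkn : k < n) (f : ℝ → ℝ) (hf : f 0 = 0) (a b : ℝ) :
    ∑ i : Fin n, f (if (i : ℕ) < k then a else if (i : ℕ) = k then b else 0) =
      k * f a + f b := by
  obtain ⟨j, rfl⟩ : ∃ j, n = k + 1 + j := ⟨n - (k + 1), by omega⟩
  rw [Fin.sum_univ_eq_sum_range (fun i => f (if i < k then a else if i = k then b else 0)),
    Finset.sum_range_add, Finset.sum_range_succ, Finset.sum_congr rfl fun i hi => by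
      rw [if_pos (Finset.mem_range.1 hi)],
    Finset.sum_eq_zero (s := Finset.range j) fun i _ => by
      rw [if_neg (by omega), if_neg (by omega), hf]]
  simp

theorem wVec_one_div_add {k : ℕ} (n : ℕ) (hk : 0 < k) {z : ℝ} (hz : z ∈ Icc 0 1) :
    wVec n (1 / (k + z)) =
      fun i : Fin n =>
        if (i : ℕ) < k then 1 / (k + z) else if (i : ℕ) = k then z / (k + z) else 0 := by
  have hkz : (0 : ℝ) < k + z := add_pos_of_pos_of_nonneg (Nat.cast_pos.2 hk) hz.1
  funext i
  rw [wVec, one_div_one_div]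
  rcases hz.2.lt_or_eq with hz1 | rfl
  · have hfloor : ⌊(k : ℝ) + z⌋₊ = k := by
      rw [Nat.floor_eq_iff hkz.le]; constructor <;> linarith [hz.1]
    rw [hfloor, show 1 - (k : ℝ) * (1 / (k + z)) = z / (k + z) by field_simp; ring]
  · have hfloor : ⌊(k : ℝ) + 1⌋₊ = k + 1 := by exact_mod_cast Nat.floor_natCast (k + 1)
    rw [hfloor]
    split_ifs <;> first | omega | simp [hkz.ne']

theorem shannonEntropy_wVec_one_div_add {k : ℕ} (n : ℕ) (hk : 0 < k) (hkn : k < n) {z : ℝ}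
    (hz : z ∈ Icc 0 1) : shannonEntropy (wVec n (1 / (k + z))) = entropyProfile k z := by
  have hkz : (0 : ℝ) < k + z := add_pos_of_pos_of_nonneg (Nat.cast_pos.2 hk) hz.1
  rw [shannonEntropy, wVec_one_div_add n hk hz,
    sum_ite_lt_ite_eq hkn (fun x => x * log x) (by simp), entropyProfile]
  have hlog_q : z / (k + z) * log (z / (k + z)) = z / (k + z) * (log z - log (k + z)) := by
    rcases hz.1.eq_or_lt with rfl | hz0
    · simp
    · rw [log_div hz0.ne' hkz.ne']
  rw [hlog_q, one_div, log_inv]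
  field_simp
  ring

theorem lNorm_wVec_one_div_add {k : ℕ} (n : ℕ) (hk : 0 < k) (hkn : k < n) {α : ℝ}
    (hα : α ≠ 0) {z : ℝ} (hz : z ∈ Icc 0 1) :
    lNorm α (wVec n (1 / (k + z))) = normProfile k α z := by
  have hkz : (0 : ℝ) < k + z := add_pos_of_pos_of_nonneg (Nat.cast_pos.2 hk) hz.1
  rw [lNorm, wVec_one_div_add n hk hz,
    sum_ite_lt_ite_eq hkn (fun x => x ^ α) (zero_rpow hα), normProfile,
    div_rpow zero_le_one hkz.le, div_rpow hz.1 hkz.le, one_rpow]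
  rw [show (k : ℝ) * (1 / (k + z) ^ α) + z ^ α / (k + z) ^ α = (k + z ^ α) / (k + z) ^ α by
      ring,
    div_rpow (add_nonneg k.cast_nonneg (rpow_nonneg hz.1 α)) (by positivity), ← rpow_mul hkz.le,
    mul_one_div_cancel hα, rpow_one]

theorem stmt6 (n m : ℕ) (hm : 2 ≤ m) (hmn : m ≤ n)
    (α : ℝ) (hα : α ∈ Set.Ioo (0 : ℝ) 1 ∪ Set.Ioi 1)
    (F : ℝ → ℝ)
    (hF : ∀ p ∈ Set.Icc (1 / (m : ℝ)) (1 / ((m : ℝ) - 1)),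
      F (shannonEntropy (wVec n p)) = lNorm α (wVec n p)) :
    StrictConcaveOn ℝ (Set.Icc (Real.log ((m : ℝ) - 1)) (Real.log m)) F := by
  obtain ⟨k, rfl⟩ : ∃ k, m = k + 1 := ⟨m - 1, by omega⟩
  have hk : (1 : ℝ) ≤ k := by exact_mod_cast (by omega : 1 ≤ k)
  have hα0 : 0 < α := by rcases hα with h | h; exacts [h.1, zero_lt_one.trans h]
  have hα1 : α ≠ 1 := by rcases hα with h | h; exacts [h.2.ne, h.ne']
  push_cast
  rw [add_sub_cancel_right]
  refine strictConcaveOn_of_comp_entropyProfile_eq hk hα0 hα1 fun z hz => ?_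
  have hp : 1 / (k + z) ∈ Icc (1 / ((k + 1 : ℕ) : ℝ)) (1 / (((k + 1 : ℕ) : ℝ) - 1)) := by
    push_cast
    rw [add_sub_cancel_right]
    exact ⟨one_div_le_one_div_of_le (by linarith [hz.1]) (by linarith [hz.2]),
      one_div_le_one_div_of_le (by linarith) (by linarith [hz.1])⟩
  rw [← shannonEntropy_wVec_one_div_add n (by omega) (by omega) hz,
    ← lNorm_wVec_one_div_add n (by omega) (by omega) hα0.ne' hz]
  exact hF _ hp
end

section
/- Let n ≥ 2 be an integer and α ∈ (0,1) ∪ (1,∞), and let L_min^α : [0, ln n] → ℝ be defined by L_min^α(h) = λ·m^{1/α−1} + (1−λ)·(m+1)^{1/α−1} where m = ⌊e^h⌋ and λ = (ln(m+1) − h)/(ln(m+1) − ln m). Then: (i) L_min^α is affine on each interval [ln m, ln(m+1)] ∩ [0, ln n] for integers 1 ≤ m ≤ n−1 (so it is piecewise linear with n−1 segments); (ii) if α ∈ (0,1), L_min^α is strictly increasing on [0, ln n]; (iii) if α > 1, L_min^α is strictly decreasing on [0, ln n]; and (iv) L_min^α is convex on [0, ln n]. -/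
open Real

/-- `L_min^α(h) = λ·m^(1/α−1) + (1−λ)·(m+1)^(1/α−1)` where `m = ⌊e^h⌋` and
`λ = (ln(m+1) − h)/(ln(m+1) − ln m)`. -/
noncomputable def Lmin (α h : ℝ) : ℝ :=
  ((Real.log ((⌊Real.exp h⌋₊ : ℝ) + 1) - h) /
      (Real.log ((⌊Real.exp h⌋₊ : ℝ) + 1) - Real.log (⌊Real.exp h⌋₊ : ℝ))) *
    (⌊Real.exp h⌋₊ : ℝ) ^ (1 / α - 1) +
  (1 - (Real.log ((⌊Real.exp h⌋₊ : ℝ) + 1) - h) /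
      (Real.log ((⌊Real.exp h⌋₊ : ℝ) + 1) - Real.log (⌊Real.exp h⌋₊ : ℝ))) *
    ((⌊Real.exp h⌋₊ : ℝ) + 1) ^ (1 / α - 1)

namespace Stmt7Aux

/-- Slope of the chord of `x ↦ x^c` (in log coordinates) on `[log m, log (m+1)]`. -/
noncomputable def A (c : ℝ) (m : ℕ) : ℝ :=
  (((m : ℝ) + 1) ^ c - (m : ℝ) ^ c) / (Real.log ((m : ℝ) + 1) - Real.log (m : ℝ))

/-- The affine piece on `[log m, log (m+1)]`. -/
noncomputable def ell (c : ℝ) (m : ℕ) (h : ℝ) : ℝ :=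
  (m : ℝ) ^ c + A c m * (h - Real.log (m : ℝ))

lemma d_pos {m : ℕ} (hm : 1 ≤ m) : 0 < Real.log ((m:ℝ)+1) - Real.log (m:ℝ) := by
  have h0 : (0:ℝ) < m := by exact_mod_cast hm
  have := Real.log_lt_log h0 (by linarith : (m:ℝ) < (m:ℝ)+1)
  linarith

lemma ell_right (c : ℝ) {m : ℕ} (hm : 1 ≤ m) :
    ell c m (Real.log ((m:ℝ)+1)) = ((m:ℝ)+1)^c := by
  have hd := (d_pos hm).ne'
  unfold ell A
  rw [div_mul_cancel₀ _ hd]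
  ring

lemma floor_exp {m : ℕ} (hm : 1 ≤ m) {h : ℝ} (h1 : Real.log (m:ℝ) ≤ h)
    (h2 : h < Real.log ((m:ℝ)+1)) : ⌊Real.exp h⌋₊ = m := by
  have h0 : (0:ℝ) < m := by exact_mod_cast hm
  rw [Nat.floor_eq_iff (le_of_lt (Real.exp_pos h))]
  constructor
  · calc (m:ℝ) = Real.exp (Real.log (m:ℝ)) := (Real.exp_log h0).symm
      _ ≤ Real.exp h := Real.exp_le_exp.mpr h1
  · calc Real.exp h < Real.exp (Real.log ((m:ℝ)+1)) := Real.exp_lt_exp.mpr h2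
      _ = (m:ℝ)+1 := Real.exp_log (by linarith)

lemma Lmin_log (α : ℝ) {k : ℕ} (hk : 1 ≤ k) :
    Lmin α (Real.log (k:ℝ)) = (k:ℝ)^(1/α-1) := by
  have h0 : (0:ℝ) < k := by exact_mod_cast hk
  have hfl : ⌊Real.exp (Real.log (k:ℝ))⌋₊ = k := by
    rw [Real.exp_log h0]; exact Nat.floor_natCast k
  have hd := (d_pos hk).ne'
  unfold Lmin
  rw [hfl, div_self hd]
  ring

lemma Lmin_eq_ell (α : ℝ) {m : ℕ} (hm : 1 ≤ m) {h : ℝ}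
    (h1 : Real.log (m:ℝ) ≤ h) (h2 : h ≤ Real.log ((m:ℝ)+1)) :
    Lmin α h = ell (1/α-1) m h := by
  rcases eq_or_lt_of_le h2 with he | hlt
  · rw [he, ell_right _ hm]
    have hcast : ((m:ℝ)+1) = ((m+1:ℕ):ℝ) := by push_cast; ring
    rw [hcast, Lmin_log α (show 1 ≤ m+1 by omega)]
  · have hfl := floor_exp hm h1 hlt
    have hd := (d_pos hm).ne'
    unfold Lmin ell A
    rw [hfl]
    field_simp
    ring

lemma A_pos {c : ℝ} (hc : 0 < c) {m : ℕ} (hm : 1 ≤ m) : 0 < A c m := by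
  have h0 : (0:ℝ) ≤ m := Nat.cast_nonneg m
  have := Real.rpow_lt_rpow h0 (by linarith : (m:ℝ) < (m:ℝ)+1) hc
  exact div_pos (by linarith) (d_pos hm)

lemma A_neg {c : ℝ} (hc : c < 0) {m : ℕ} (hm : 1 ≤ m) : A c m < 0 := by
  have h0 : (0:ℝ) < m := by exact_mod_cast hm
  have := Real.rpow_lt_rpow_of_neg h0 (by linarith : (m:ℝ) < (m:ℝ)+1) hc
  exact div_neg_of_neg_of_pos (by linarith) (d_pos hm)

lemma convexOn_g (c : ℝ) : ConvexOn ℝ Set.univ (fun x : ℝ => Real.exp (x * c)) := by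
  have h1 := convexOn_exp.comp_affineMap (AffineMap.lineMap (0:ℝ) c)
  have h2 : (fun x : ℝ => Real.exp (x*c)) = rexp ∘ ⇑(AffineMap.lineMap (0:ℝ) c) := by
    funext x; simp [AffineMap.lineMap_apply, smul_eq_mul]
  rw [h2]
  simpa using h1

lemma chord_mono (c : ℝ) {x y z : ℝ} (hx : 0 < x) (hxy : x < y) (hyz : y < z) :
    (y^c - x^c)/(Real.log y - Real.log x) ≤ (z^c - y^c)/(Real.log z - Real.log y) := by
  have hy : 0 < y := hx.trans hxy
  have hz : 0 < z := hy.trans hyz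
  have l1 : Real.log x < Real.log y := Real.log_lt_log hx hxy
  have l2 : Real.log y < Real.log z := Real.log_lt_log hy hyz
  have key := (convexOn_g c).slope_mono_adjacent (Set.mem_univ (Real.log x))
    (Set.mem_univ (Real.log z)) l1 l2
  rw [Real.rpow_def_of_pos hx, Real.rpow_def_of_pos hy, Real.rpow_def_of_pos hz]
  exact key

lemma A_mono (c : ℝ) {m : ℕ} (hm : 1 ≤ m) : A c m ≤ A c (m+1) := by
  have h := chord_mono c (show (0:ℝ) < (m:ℝ) by exact_mod_cast hm)
    (show (m:ℝ) < (m:ℝ)+1 by linarith) (show (m:ℝ)+1 < (m:ℝ)+2 by linarith)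
  unfold A
  push_cast
  have e : (m:ℝ)+1+1 = (m:ℝ)+2 := by ring
  rw [e]
  exact h

lemma ell_eq' (c : ℝ) {m : ℕ} (hm : 1 ≤ m) (h : ℝ) :
    ell c m h = ((m:ℝ)+1)^c + A c m * (h - Real.log ((m:ℝ)+1)) := by
  have hd := (d_pos hm).ne'
  unfold ell A
  field_simp
  ring

lemma ell_step_right (c : ℝ) {m : ℕ} (hm : 1 ≤ m) {h : ℝ}
    (hh : Real.log ((m:ℝ)+1) ≤ h) : ell c m h ≤ ell c (m+1) h := by
  have hA := A_mono c hm
  rw [ell_eq' c hm h]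
  unfold ell
  push_cast
  nlinarith [mul_nonneg (sub_nonneg.mpr hA) (sub_nonneg.mpr hh)]

lemma ell_step_left (c : ℝ) {m : ℕ} (hm : 1 ≤ m) {h : ℝ}
    (hh : h ≤ Real.log ((m:ℝ)+1)) : ell c (m+1) h ≤ ell c m h := by
  have hA := A_mono c hm
  rw [ell_eq' c hm h]
  unfold ell
  push_cast
  nlinarith [mul_nonpos_of_nonneg_of_nonpos (sub_nonneg.mpr hA) (sub_nonpos.mpr hh)]

lemma ell_chain_right (c : ℝ) {h : ℝ} :
    ∀ k m : ℕ, 1 ≤ m → m ≤ k → Real.log (k:ℝ) ≤ h → ell c m h ≤ ell c k h := by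
  intro k
  induction k with
  | zero => intro m hm hk _; omega
  | succ k ih =>
    intro m hm hk hh
    rcases Nat.eq_or_lt_of_le hk with he | hlt
    · rw [he]
    · have hmk : m ≤ k := by omega
      have hk1 : 1 ≤ k := by omega
      have hh' : Real.log ((k:ℝ)+1) ≤ h := by push_cast at hh; linarith
      have h1 : Real.log (k:ℝ) ≤ h := by linarith [d_pos hk1]
      calc ell c m h ≤ ell c k h := ih m hm hmk h1
        _ ≤ ell c (k+1) h := ell_step_right c hk1 hh'

lemma ell_chain_left (c : ℝ) {h : ℝ} :
    ∀ m k : ℕ, 1 ≤ k → k ≤ m → h ≤ Real.log ((k:ℝ)+1) → ell c m h ≤ ell c k h := by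
  intro m
  induction m with
  | zero => intro k hk hm _; omega
  | succ m ih =>
    intro k hk hm hh
    rcases Nat.eq_or_lt_of_le hm with he | hlt
    · rw [he]
    · have hkm : k ≤ m := by omega
      have hm1 : 1 ≤ m := by omega
      have hh' : h ≤ Real.log ((m:ℝ)+1) := by
        have : ((k:ℝ)+1) ≤ ((m:ℝ)+1) := by
          have : (k:ℝ) ≤ m := by exact_mod_cast hkm
          linarith
        have := Real.log_le_log (by positivity) this
        linarith
      calc ell c (m+1) h ≤ ell c m h := ell_step_left c hm1 hh'
        _ ≤ ell c k h := ih k hk hkm hh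

lemma convexOn_affine (s : Set ℝ) (hs : Convex ℝ s) (a b : ℝ) :
    ConvexOn ℝ s (fun x => a * x + b) := by
  refine ⟨hs, fun x _ y _ p q hp hq hpq => ?_⟩
  simp only [smul_eq_mul]
  apply le_of_eq
  have hq1 : q = 1 - p := by linarith
  rw [hq1]; ring

lemma convexOn_ell (c : ℝ) (m : ℕ) (s : Set ℝ) (hs : Convex ℝ s) :
    ConvexOn ℝ s (ell c m) := by
  have he : ell c m = fun h => A c m * h + ((m:ℝ)^c - A c m * Real.log (m:ℝ)) := by
    funext h; unfold ell; ring
  rw [he]; exact convexOn_affine s hs _ _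

lemma convexOn_sup' {ι : Type} (f : ι → ℝ → ℝ) (s : Set ℝ) :
    ∀ (S : Finset ι) (hS : S.Nonempty), (∀ i ∈ S, ConvexOn ℝ s (f i)) →
    ConvexOn ℝ s (fun x => S.sup' hS (fun i => f i x)) := by
  intro S
  induction S using Finset.cons_induction with
  | empty => intro hS; simp at hS
  | cons a t ha ih =>
    intro hS hf
    rcases t.eq_empty_or_nonempty with rfl | ht
    · simpa using hf a (Finset.mem_cons_self a _)
    · have h1 := ih ht (fun i hi => hf i (Finset.mem_cons_of_mem hi))
      have h2 := hf a (Finset.mem_cons_self a _)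
      have h3 := h2.sup h1
      have he : (fun x => (Finset.cons a t ha).sup' hS (fun i => f i x)) =
          (f a ⊔ fun x => t.sup' ht (fun i => f i x)) := by
        funext x
        rw [Finset.sup'_cons ht]
        rfl
      rw [he]; exact h3

lemma convexOn_congr {s : Set ℝ} {f g : ℝ → ℝ} (hf : ConvexOn ℝ s f)
    (he : ∀ x ∈ s, f x = g x) : ConvexOn ℝ s g := by
  refine ⟨hf.1, fun x hx y hy p q hp hq hpq => ?_⟩
  rw [← he x hx, ← he y hy, ← he _ (hf.1 hx hy hp hq hpq)]
  exact hf.2 hx hy hp hq hpq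

lemma Lmin_eq_sup (α : ℝ) (n : ℕ) (hn : 2 ≤ n) {h : ℝ}
    (hh : h ∈ Set.Icc (0:ℝ) (Real.log (n:ℝ))) :
    Lmin α h = (Finset.Icc 1 (n-1)).sup'
      ⟨1, Finset.mem_Icc.mpr ⟨le_refl 1, by omega⟩⟩ (fun m => ell (1/α-1) m h) := by
  obtain ⟨h0, h1⟩ := hh
  have hn0 : (0:ℝ) < n := by positivity
  have hexp1 : (1:ℝ) ≤ Real.exp h := by
    rw [← Real.exp_zero]; exact Real.exp_le_exp.mpr h0
  have hexpn : Real.exp h ≤ (n:ℝ) := by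
    calc Real.exp h ≤ Real.exp (Real.log (n:ℝ)) := Real.exp_le_exp.mpr h1
      _ = (n:ℝ) := Real.exp_log hn0
  have hf1 : 1 ≤ ⌊Real.exp h⌋₊ := Nat.le_floor (by exact_mod_cast hexp1)
  have hfn : ⌊Real.exp h⌋₊ ≤ n := by
    have := Nat.floor_le_floor hexpn
    simpa using this
  set k := min ⌊Real.exp h⌋₊ (n-1) with hkdef
  have hk1 : 1 ≤ k := by omega
  have hkn : k ≤ n - 1 := min_le_right _ _
  have hkpos : (0:ℝ) < k := by exact_mod_cast hk1
  have hlow : Real.log (k:ℝ) ≤ h := by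
    rw [Real.log_le_iff_le_exp hkpos]
    calc (k:ℝ) ≤ (⌊Real.exp h⌋₊ : ℝ) := by exact_mod_cast min_le_left _ _
      _ ≤ Real.exp h := Nat.floor_le (le_of_lt (Real.exp_pos h))
  have hhigh : h ≤ Real.log ((k:ℝ)+1) := by
    have hk1' : (0:ℝ) < (k:ℝ)+1 := by linarith
    rw [Real.le_log_iff_exp_le hk1']
    rcases le_or_gt ⌊Real.exp h⌋₊ (n-1) with hle | hgt
    · have hkeq : k = ⌊Real.exp h⌋₊ := min_eq_left hle
      rw [hkeq]
      exact le_of_lt (Nat.lt_floor_add_one _)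
    · have hkeq : k = n - 1 := min_eq_right (by omega)
      have hfn' : ⌊Real.exp h⌋₊ = n := by omega
      have : (n:ℝ) ≤ Real.exp h := by
        have := Nat.floor_le (le_of_lt (Real.exp_pos h))
        rw [hfn'] at this; exact this
      have hke : (k:ℝ)+1 = (n:ℝ) := by
        rw [hkeq]; push_cast [Nat.cast_sub (by omega : 1 ≤ n)]; ring
      linarith
  have hLk := Lmin_eq_ell α hk1 hlow hhigh
  apply le_antisymm
  · rw [hLk]
    exact Finset.le_sup' (fun m => Stmt7Aux.ell (1/α-1) m h) (Finset.mem_Icc.mpr ⟨hk1, hkn⟩)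
  · apply Finset.sup'_le
    intro m hm
    rw [hLk]
    obtain ⟨hm1, hm2⟩ := Finset.mem_Icc.mp hm
    rcases le_total m k with hmk | hkm
    · exact ell_chain_right _ k m hm1 hmk hlow
    · exact ell_chain_left _ m k hk1 hkm hhigh

lemma glue_mono {f : ℝ → ℝ} {a b c : ℝ} (hab : a ≤ b) (hbc : b ≤ c)
    (h1 : StrictMonoOn f (Set.Icc a b)) (h2 : StrictMonoOn f (Set.Icc b c)) :
    StrictMonoOn f (Set.Icc a c) := by
  intro x hx y hy hxy
  rcases le_or_gt y b with hyb | hby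
  · exact h1 ⟨hx.1, by linarith⟩ ⟨hy.1, hyb⟩ hxy
  rcases le_or_gt b x with hbx | hxb
  · exact h2 ⟨hbx, hx.2⟩ ⟨by linarith, hy.2⟩ hxy
  · exact lt_trans (h1 ⟨hx.1, le_of_lt hxb⟩ ⟨hab, le_refl b⟩ hxb)
      (h2 ⟨le_refl b, hbc⟩ ⟨le_of_lt hby, hy.2⟩ hby)

lemma glue_anti {f : ℝ → ℝ} {a b c : ℝ} (hab : a ≤ b) (hbc : b ≤ c)
    (h1 : StrictAntiOn f (Set.Icc a b)) (h2 : StrictAntiOn f (Set.Icc b c)) :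
    StrictAntiOn f (Set.Icc a c) := by
  intro x hx y hy hxy
  rcases le_or_gt y b with hyb | hby
  · exact h1 ⟨hx.1, by linarith⟩ ⟨hy.1, hyb⟩ hxy
  rcases le_or_gt b x with hbx | hxb
  · exact h2 ⟨hbx, hx.2⟩ ⟨by linarith, hy.2⟩ hxy
  · exact lt_trans (h2 ⟨le_refl b, hbc⟩ ⟨le_of_lt hby, hy.2⟩ hby)
      (h1 ⟨hx.1, le_of_lt hxb⟩ ⟨hab, le_refl b⟩ hxb)

end Stmt7Aux

theorem stmt7 (n : ℕ) (hn : 2 ≤ n) (α : ℝ) (hα : α ∈ Set.Ioo (0 : ℝ) 1 ∪ Set.Ioi 1) :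
    (∀ m : ℕ, 1 ≤ m → m ≤ n - 1 →
      ∃ a b : ℝ, ∀ h ∈ Set.Icc (Real.log (m : ℝ)) (Real.log ((m : ℝ) + 1)) ∩
          Set.Icc (0 : ℝ) (Real.log n),
        Lmin α h = a * h + b) ∧
    (α < 1 → StrictMonoOn (Lmin α) (Set.Icc 0 (Real.log n))) ∧
    (1 < α → StrictAntiOn (Lmin α) (Set.Icc 0 (Real.log n))) ∧
    ConvexOn ℝ (Set.Icc 0 (Real.log n)) (Lmin α) := by
  classical
  have hα0 : 0 < α := by
    rcases hα with h1 | h1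
    · exact h1.1
    · have : (1:ℝ) < α := h1
      linarith
  have hαne : α ≠ 1 := by
    rcases hα with h1 | h1
    · exact ne_of_lt h1.2
    · exact ne_of_gt h1
  refine ⟨?_, ?_, ?_, ?_⟩
  · -- piecewise affine
    intro m hm _
    refine ⟨Stmt7Aux.A (1/α-1) m, (m:ℝ)^(1/α-1) - Stmt7Aux.A (1/α-1) m * Real.log (m:ℝ),
      fun h hh => ?_⟩
    rw [Stmt7Aux.Lmin_eq_ell α hm hh.1.1 hh.1.2]
    unfold Stmt7Aux.ell
    ring
  · -- strictly increasing for α < 1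
    intro hlt
    have hc : 0 < 1/α - 1 := by
      have : (1:ℝ) < 1/α := one_lt_one_div hα0 hlt
      linarith
    have piece : ∀ m : ℕ, 1 ≤ m →
        StrictMonoOn (Lmin α) (Set.Icc (Real.log (m:ℝ)) (Real.log ((m:ℝ)+1))) := by
      intro m hm x hx y hy hxy
      rw [Stmt7Aux.Lmin_eq_ell α hm hx.1 hx.2, Stmt7Aux.Lmin_eq_ell α hm hy.1 hy.2]
      unfold Stmt7Aux.ell
      have hA := Stmt7Aux.A_pos hc hm
      nlinarith
    have main : ∀ k : ℕ, 1 ≤ k → k ≤ n →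
        StrictMonoOn (Lmin α) (Set.Icc 0 (Real.log (k:ℝ))) := by
      intro k
      induction k with
      | zero => omega
      | succ k ih =>
        intro _ hkn
        rcases Nat.eq_or_lt_of_le (show 1 ≤ k+1 by omega) with he | hlt'
        · have hk0 : k = 0 := by omega
          subst hk0
          intro x hx y hy hxy
          exfalso
          norm_num [Set.mem_Icc] at hx hy
          linarith [hx, hy]
        · have hk1 : 1 ≤ k := by omega
          have h1 := ih hk1 (by omega)
          have h2 := piece k hk1
          have hcast : ((k+1:ℕ):ℝ) = (k:ℝ)+1 := by push_cast; ring
          rw [hcast]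
          have h0k : (0:ℝ) ≤ Real.log (k:ℝ) := Real.log_natCast_nonneg k
          exact Stmt7Aux.glue_mono h0k (by linarith [Stmt7Aux.d_pos hk1]) h1 h2
    exact main n (by omega) le_rfl
  · -- strictly decreasing for α > 1
    intro hgt
    have hc : 1/α - 1 < 0 := by
      have : 1/α < 1 := by
        rw [div_lt_one hα0]; exact hgt
      linarith
    have piece : ∀ m : ℕ, 1 ≤ m →
        StrictAntiOn (Lmin α) (Set.Icc (Real.log (m:ℝ)) (Real.log ((m:ℝ)+1))) := by
      intro m hm x hx y hy hxy
      rw [Stmt7Aux.Lmin_eq_ell α hm hx.1 hx.2, Stmt7Aux.Lmin_eq_ell α hm hy.1 hy.2]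
      unfold Stmt7Aux.ell
      have hA := Stmt7Aux.A_neg hc hm
      nlinarith
    have main : ∀ k : ℕ, 1 ≤ k → k ≤ n →
        StrictAntiOn (Lmin α) (Set.Icc 0 (Real.log (k:ℝ))) := by
      intro k
      induction k with
      | zero => omega
      | succ k ih =>
        intro _ hkn
        rcases Nat.eq_or_lt_of_le (show 1 ≤ k+1 by omega) with he | hlt'
        · have hk0 : k = 0 := by omega
          subst hk0
          intro x hx y hy hxy
          exfalso
          norm_num [Set.mem_Icc] at hx hy
          linarith [hx, hy]
        · have hk1 : 1 ≤ k := by omega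
          have h1 := ih hk1 (by omega)
          have h2 := piece k hk1
          have hcast : ((k+1:ℕ):ℝ) = (k:ℝ)+1 := by push_cast; ring
          rw [hcast]
          have h0k : (0:ℝ) ≤ Real.log (k:ℝ) := Real.log_natCast_nonneg k
          exact Stmt7Aux.glue_anti h0k (by linarith [Stmt7Aux.d_pos hk1]) h1 h2
    exact main n (by omega) le_rfl
  · -- convexity
    have hne : (Finset.Icc 1 (n-1)).Nonempty :=
      ⟨1, Finset.mem_Icc.mpr ⟨le_refl 1, by omega⟩⟩
    have hconv := Stmt7Aux.convexOn_sup' (fun m => Stmt7Aux.ell (1/α-1) m)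
      (Set.Icc 0 (Real.log (n:ℝ))) (Finset.Icc 1 (n-1)) hne
      (fun i _ => Stmt7Aux.convexOn_ell (1/α-1) i _ (convex_Icc _ _))
    exact Stmt7Aux.convexOn_congr hconv
      (fun h hh => (Stmt7Aux.Lmin_eq_sup α n hn hh).symm)
end

section
/- Let n ≥ 2 be an integer and α ∈ (0,1) ∪ (1,∞). For every h ∈ [0, ln n] there exist t ∈ [0, 1] and p_0, p_1 ∈ 𝒫_n such that t·H(p_0) + (1−t)·H(p_1) = h and t·‖p_0‖_α + (1−t)·‖p_1‖_α = L_min^α(h). Indeed, when h < ln n one may take m = ⌊e^h⌋, p_0 = w_n(1/m), p_1 = w_n(1/(m+1)), and t = (ln(m+1) − h)/(ln(m+1) − ln m); when h = ln n one may take p_0 = p_1 = u_n. -/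
open Real

/-!
For `k ≤ n`, `w_n(1/k)` is uniform on its first `k` coordinates, so its entropy is `ln k` and its
`ℓ_α`-norm is `k^(1/α - 1)`. With `m = ⌊e^h⌋` one has `ln m ≤ h < ln (m + 1)`, so
`λ = (ln (m + 1) - h) / (ln (m + 1) - ln m)` lies in `[0, 1]` and is the weight for which
`λ ln m + (1 - λ) ln (m + 1) = h`; the same mixture of the norms of `w_n(1/m)` and `w_n(1/(m+1))`
is `L_min^α(h)` by definition. At `h = ln n` one has `m = n`, `λ = 1` and `w_n(1/n) = u_n`.
-/

open Set

section UniformPrefix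

variable {n k : ℕ}

lemma wVec_one_div_natCast_apply (hk : k ≠ 0) (i : Fin n) :
    wVec n (1 / k) i = if (i : ℕ) < k then (1 / k : ℝ) else 0 := by
  have hk' : (k : ℝ) ≠ 0 := Nat.cast_ne_zero.mpr hk
  simp only [wVec, one_div_one_div, Nat.floor_natCast]
  split_ifs <;> first | rfl | field_simp; ring

lemma sum_comp_wVec_one_div_natCast {φ : ℝ → ℝ} (hφ : φ 0 = 0) (hk : k ≠ 0) (hkn : k ≤ n) :
    ∑ i, φ (wVec n (1 / k) i) = k * φ (1 / k) := by
  simp_rw [wVec_one_div_natCast_apply hk, apply_ite φ, hφ]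
  rw [← Finset.sum_filter, Finset.sum_const, Fin.card_filter_val_lt, min_eq_right hkn, nsmul_eq_mul]

lemma isProbVec_wVec_one_div_natCast (hk : k ≠ 0) (hkn : k ≤ n) :
    IsProbVec (wVec n (1 / k)) := by
  refine ⟨fun i => ?_, ?_⟩
  · rw [wVec_one_div_natCast_apply hk]
    split_ifs <;> positivity
  · exact (sum_comp_wVec_one_div_natCast (φ := id) rfl hk hkn).trans
      (mul_one_div_cancel (Nat.cast_ne_zero.mpr hk))

lemma shannonEntropy_wVec_one_div_natCast (hk : k ≠ 0) (hkn : k ≤ n) :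
    shannonEntropy (wVec n (1 / k)) = log k := by
  rw [shannonEntropy, sum_comp_wVec_one_div_natCast (φ := fun x => x * log x) (by simp) hk hkn,
    one_div, log_inv]
  field_simp [Nat.cast_ne_zero.mpr hk]

lemma lNorm_wVec_one_div_natCast {α : ℝ} (hα : α ≠ 0) (hk : k ≠ 0) (hkn : k ≤ n) :
    lNorm α (wVec n (1 / k)) = (k : ℝ) ^ (1 / α - 1) := by
  have hk' : (0 : ℝ) < k := Nat.cast_pos.mpr (Nat.pos_of_ne_zero hk)
  rw [lNorm, sum_comp_wVec_one_div_natCast (φ := fun x => x ^ α) (zero_rpow hα) hk hkn,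
    one_div, inv_rpow hk'.le, ← rpow_neg hk'.le, mul_comm, ← rpow_add_one hk'.ne',
    ← rpow_mul hk'.le]
  congr 1
  field_simp
  ring

end UniformPrefix

noncomputable def lminWeight (h : ℝ) : ℝ :=
  (log ((⌊exp h⌋₊ : ℝ) + 1) - h) / (log ((⌊exp h⌋₊ : ℝ) + 1) - log (⌊exp h⌋₊ : ℝ))

lemma Lmin_eq_lminWeight (α h : ℝ) :
    Lmin α h = lminWeight h * (⌊exp h⌋₊ : ℝ) ^ (1 / α - 1) +
      (1 - lminWeight h) * ((⌊exp h⌋₊ : ℝ) + 1) ^ (1 / α - 1) :=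
  rfl

section FloorExp

variable {h : ℝ}

lemma floor_exp_ne_zero (hh : 0 ≤ h) : ⌊exp h⌋₊ ≠ 0 :=
  (Nat.floor_pos.mpr (one_le_exp hh)).ne'

lemma floor_exp_lt {n : ℕ} (hh : h ∈ Ico 0 (log n)) : ⌊exp h⌋₊ < n := by
  have hn : (1 : ℝ) < n := (log_pos_iff n.cast_nonneg).mp (hh.1.trans_lt hh.2)
  exact (Nat.floor_lt (exp_pos h).le).mpr ((lt_log_iff_exp_lt (by linarith)).mp hh.2)

lemma log_floor_exp_le (hh : 0 ≤ h) : log ⌊exp h⌋₊ ≤ h :=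
  (log_le_iff_le_exp (Nat.cast_pos.mpr (Nat.pos_of_ne_zero (floor_exp_ne_zero hh)))).mpr
    (Nat.floor_le (exp_pos h).le)

lemma lt_log_floor_exp_add_one : h < log (⌊exp h⌋₊ + 1) :=
  (lt_log_iff_exp_lt (by positivity)).mpr (Nat.lt_floor_add_one _)

lemma log_floor_exp_lt_log_add_one (hh : 0 ≤ h) : log ⌊exp h⌋₊ < log (⌊exp h⌋₊ + 1) :=
  log_lt_log (Nat.cast_pos.mpr (Nat.pos_of_ne_zero (floor_exp_ne_zero hh))) (lt_add_one _)

lemma lminWeight_mem_Icc (hh : 0 ≤ h) : lminWeight h ∈ Icc 0 1 := by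
  have hlog := log_floor_exp_lt_log_add_one hh
  have hlow := log_floor_exp_le hh
  have hhigh : h < log (⌊exp h⌋₊ + 1) := lt_log_floor_exp_add_one
  exact ⟨div_nonneg (by linarith) (by linarith), (div_le_one (by linarith)).mpr (by linarith)⟩

lemma lminWeight_mul_log_add (hh : 0 ≤ h) :
    lminWeight h * log ⌊exp h⌋₊ + (1 - lminWeight h) * log (⌊exp h⌋₊ + 1) = h := by
  have hlog := log_floor_exp_lt_log_add_one hh
  rw [lminWeight]
  field_simp [(sub_pos.mpr hlog).ne']
  ring

end FloorExp

section Mixture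

variable {n : ℕ} {h : ℝ}

lemma lminWeight_mul_shannonEntropy_add (hh : h ∈ Ico 0 (log n)) :
    lminWeight h * shannonEntropy (wVec n (1 / ⌊exp h⌋₊)) +
      (1 - lminWeight h) * shannonEntropy (wVec n (1 / (⌊exp h⌋₊ + 1))) = h := by
  have hmn := floor_exp_lt hh
  rw [shannonEntropy_wVec_one_div_natCast (floor_exp_ne_zero hh.1) hmn.le, ← Nat.cast_add_one,
    shannonEntropy_wVec_one_div_natCast (Nat.succ_ne_zero _) hmn, Nat.cast_add_one]
  exact lminWeight_mul_log_add hh.1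

lemma lminWeight_mul_lNorm_add {α : ℝ} (hα : α ≠ 0) (hh : h ∈ Ico 0 (log n)) :
    lminWeight h * lNorm α (wVec n (1 / ⌊exp h⌋₊)) +
      (1 - lminWeight h) * lNorm α (wVec n (1 / (⌊exp h⌋₊ + 1))) = Lmin α h := by
  have hmn := floor_exp_lt hh
  rw [lNorm_wVec_one_div_natCast hα (floor_exp_ne_zero hh.1) hmn.le, ← Nat.cast_add_one,
    lNorm_wVec_one_div_natCast hα (Nat.succ_ne_zero _) hmn, Nat.cast_add_one, Lmin_eq_lminWeight]

end Mixture

lemma wVec_one_div_self {n : ℕ} (hn : n ≠ 0) : wVec n (1 / n) = fun _ => 1 / (n : ℝ) :=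
  funext fun i => by rw [wVec_one_div_natCast_apply hn, if_pos i.isLt]

lemma lminWeight_log_natCast {n : ℕ} (hn : n ≠ 0) : lminWeight (log n) = 1 := by
  have hn' : (0 : ℝ) < n := Nat.cast_pos.mpr (Nat.pos_of_ne_zero hn)
  rw [lminWeight, exp_log hn', Nat.floor_natCast]
  exact div_self (sub_pos.mpr (log_lt_log hn' (lt_add_one _))).ne'

lemma Lmin_log_natCast {n : ℕ} (hn : n ≠ 0) (α : ℝ) : Lmin α (log n) = (n : ℝ) ^ (1 / α - 1) := by
  rw [Lmin_eq_lminWeight, lminWeight_log_natCast hn,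
    exp_log (Nat.cast_pos.mpr (Nat.pos_of_ne_zero hn)), Nat.floor_natCast]
  ring

theorem stmt11 (n : ℕ) (hn : 2 ≤ n) (α : ℝ) (hα : α ∈ Set.Ioo (0 : ℝ) 1 ∪ Set.Ioi 1) :
    (∀ h ∈ Set.Icc (0 : ℝ) (Real.log n),
      ∃ t ∈ Set.Icc (0 : ℝ) 1, ∃ p₀ p₁ : Fin n → ℝ, IsProbVec p₀ ∧ IsProbVec p₁ ∧
        t * shannonEntropy p₀ + (1 - t) * shannonEntropy p₁ = h ∧
        t * lNorm α p₀ + (1 - t) * lNorm α p₁ = Lmin α h) ∧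
    (∀ h ∈ Set.Ico (0 : ℝ) (Real.log n),
      ((Real.log ((⌊Real.exp h⌋₊ : ℝ) + 1) - h) /
            (Real.log ((⌊Real.exp h⌋₊ : ℝ) + 1) - Real.log (⌊Real.exp h⌋₊ : ℝ))) *
          shannonEntropy (wVec n (1 / (⌊Real.exp h⌋₊ : ℝ))) +
        (1 - (Real.log ((⌊Real.exp h⌋₊ : ℝ) + 1) - h) /
            (Real.log ((⌊Real.exp h⌋₊ : ℝ) + 1) - Real.log (⌊Real.exp h⌋₊ : ℝ))) *
          shannonEntropy (wVec n (1 / ((⌊Real.exp h⌋₊ : ℝ) + 1))) = h ∧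
      ((Real.log ((⌊Real.exp h⌋₊ : ℝ) + 1) - h) /
            (Real.log ((⌊Real.exp h⌋₊ : ℝ) + 1) - Real.log (⌊Real.exp h⌋₊ : ℝ))) *
          lNorm α (wVec n (1 / (⌊Real.exp h⌋₊ : ℝ))) +
        (1 - (Real.log ((⌊Real.exp h⌋₊ : ℝ) + 1) - h) /
            (Real.log ((⌊Real.exp h⌋₊ : ℝ) + 1) - Real.log (⌊Real.exp h⌋₊ : ℝ))) *
          lNorm α (wVec n (1 / ((⌊Real.exp h⌋₊ : ℝ) + 1))) = Lmin α h) ∧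
    (shannonEntropy (fun _ : Fin n => 1 / (n : ℝ)) = Real.log n ∧
      lNorm α (fun _ : Fin n => 1 / (n : ℝ)) = Lmin α (Real.log n)) := by
  have hα0 : α ≠ 0 := by
    rcases hα with hα | hα
    · exact hα.1.ne'
    · exact (zero_lt_one.trans hα).ne'
  have hn0 : n ≠ 0 := by omega
  have uniform_prob : IsProbVec (fun _ : Fin n => 1 / (n : ℝ)) :=
    wVec_one_div_self hn0 ▸ isProbVec_wVec_one_div_natCast hn0 le_rfl
  have uniform_entropy : shannonEntropy (fun _ : Fin n => 1 / (n : ℝ)) = log n := by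
    rw [← wVec_one_div_self hn0, shannonEntropy_wVec_one_div_natCast hn0 le_rfl]
  have uniform_lNorm : lNorm α (fun _ : Fin n => 1 / (n : ℝ)) = Lmin α (log n) := by
    rw [← wVec_one_div_self hn0, lNorm_wVec_one_div_natCast hα0 hn0 le_rfl, Lmin_log_natCast hn0]
  refine ⟨fun h hh => ?_, fun h hh => ⟨lminWeight_mul_shannonEntropy_add hh,
    lminWeight_mul_lNorm_add hα0 hh⟩, uniform_entropy, uniform_lNorm⟩
  rcases hh.2.lt_or_eq with hlt | rfl
  · have hmn := floor_exp_lt ⟨hh.1, hlt⟩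
    refine ⟨lminWeight h, lminWeight_mem_Icc hh.1, _, _,
      isProbVec_wVec_one_div_natCast (floor_exp_ne_zero hh.1) hmn.le, ?_,
      lminWeight_mul_shannonEntropy_add ⟨hh.1, hlt⟩, lminWeight_mul_lNorm_add hα0 ⟨hh.1, hlt⟩⟩
    exact_mod_cast isProbVec_wVec_one_div_natCast (Nat.succ_ne_zero _) hmn
  · exact ⟨1, right_mem_Icc.mpr zero_le_one, _, _, uniform_prob, uniform_prob,
      by rw [uniform_entropy]; ring, by rw [uniform_lNorm]; ring⟩
end

section
/- Let n ≥ 3 be an integer, let α ∈ [1/2, 1) ∪ (1, ∞), and let p* ∈ (0, 1/n) satisfy the tangency equation. For every h ∈ [0, ln n] there exist t ∈ [0, 1] and p_0, p_1 ∈ 𝒫_n such that t·H(p_0) + (1−t)·H(p_1) = h and t·‖p_0‖_α + (1−t)·‖p_1‖_α = L_max^α(h). Indeed, when h ≤ H_{v_n}(p*) one may take p_0 = p_1 = v_n(p) where p ∈ [0, 1/n] satisfies H_{v_n}(p) = h, and when h > H_{v_n}(p*) one may take p_0 = v_n(p*), p_1 = u_n, and t = (ln n − h)/(ln n − H_{v_n}(p*)).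 -/
open Real

/-- `H_{v_n}(p) = H(v_n(p))`. -/
noncomputable def Hv (n : ℕ) (p : ℝ) : ℝ := shannonEntropy (vVec n p)

/-- The derivative of `‖v_n(p)‖_α` with respect to `H_{v_n}(p)`. -/
noncomputable def Dva (n : ℕ) (α p : ℝ) : ℝ :=
  (((n : ℝ) - 1) * p ^ α + (1 - ((n : ℝ) - 1) * p) ^ α) ^ (1 / α - 1) *
    ((p ^ (α - 1) - (1 - ((n : ℝ) - 1) * p) ^ (α - 1)) /
      (Real.log (1 - ((n : ℝ) - 1) * p) - Real.log p))

/-- The tangency equation `(ln n − H_{v_n}(p))·D_{n,α}(p) = n^{1/α−1} − ‖v_n(p)‖_α`. -/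
def TangencyEq (n : ℕ) (α p : ℝ) : Prop :=
  (Real.log n - Hv n p) * Dva n α p = (n : ℝ) ^ (1 / α - 1) - lNorm α (vVec n p)

/- Below the tangency point the value `L h` is attained by the single vector `v_n(p)` with
`H_{v_n}(p) = h` (one exists by the intermediate value theorem, `H_{v_n}` running from `0` to
`ln n`); above it, by the convex combination of `v_n(p*)` and the uniform vector whose weight is
read off the chord from `(H_{v_n}(p*), ‖v_n(p*)‖_α)` to `(ln n, n^{1/α-1})`. -/

lemma Fin.sum_ite_val_eq_zero {n : ℕ} (hn : 0 < n) (c d : ℝ) :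
    ∑ i : Fin n, (if (i : ℕ) = 0 then c else d) = c + ((n : ℝ) - 1) * d := by
  obtain ⟨m, rfl⟩ := Nat.exists_eq_add_of_lt hn
  simp [Fin.sum_univ_succ]

section vVec

variable {n : ℕ}

lemma vVec_isProbVec (hn : 0 < n) {q : ℝ} (hq : q ∈ Set.Icc (0 : ℝ) (1 / (n : ℝ))) :
    IsProbVec (vVec n q) := by
  have hn' : (1 : ℝ) ≤ n := by exact_mod_cast hn
  have hfirst : ((n : ℝ) - 1) * q ≤ 1 := by
    calc ((n : ℝ) - 1) * q ≤ ((n : ℝ) - 1) * (1 / n) :=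
          mul_le_mul_of_nonneg_left hq.2 (by linarith)
      _ ≤ 1 := by rw [mul_one_div, div_le_one (by linarith)]; linarith
  refine ⟨fun i => ?_, ?_⟩
  · simp only [vVec]
    split_ifs
    · linarith
    · exact hq.1
  · simp only [vVec]
    rw [Fin.sum_ite_val_eq_zero hn]
    ring

lemma Hv_eq (hn : 0 < n) (q : ℝ) :
    Hv n q = -((1 - ((n : ℝ) - 1) * q) * log (1 - ((n : ℝ) - 1) * q) +
      ((n : ℝ) - 1) * (q * log q)) := by
  rw [Hv, shannonEntropy, ← Fin.sum_ite_val_eq_zero hn]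
  congr 1
  refine Finset.sum_congr rfl fun i _ => ?_
  simp only [vVec]
  split_ifs <;> rfl

lemma continuous_Hv (hn : 0 < n) : Continuous (Hv n) := by
  simp only [funext (Hv_eq hn)]
  fun_prop

lemma Hv_zero (hn : 0 < n) : Hv n 0 = 0 := by
  simp [Hv_eq hn]

lemma Hv_one_div (hn : 0 < n) : Hv n (1 / (n : ℝ)) = log n := by
  have hn' : (n : ℝ) ≠ 0 := by exact_mod_cast hn.ne'
  have hfirst : 1 - ((n : ℝ) - 1) * (1 / n) = 1 / n := by field_simp; ring
  rw [Hv_eq hn, hfirst, one_div, log_inv]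
  field_simp
  ring

lemma exists_Hv_eq (hn : 0 < n) {h : ℝ} (hh : h ∈ Set.Icc 0 (log n)) :
    ∃ q ∈ Set.Icc (0 : ℝ) (1 / (n : ℝ)), Hv n q = h := by
  rw [← Hv_zero hn, ← Hv_one_div hn] at hh
  exact intermediate_value_Icc (by positivity) (continuous_Hv hn).continuousOn hh

lemma isProbVec_uniform (hn : 0 < n) : IsProbVec (fun _ : Fin n => 1 / (n : ℝ)) := by
  refine ⟨fun _ => by positivity, ?_⟩
  simp [Finset.card_univ, Nat.cast_ne_zero.mpr hn.ne']

lemma shannonEntropy_uniform (hn : 0 < n) :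
    shannonEntropy (fun _ : Fin n => 1 / (n : ℝ)) = log n := by
  simp [shannonEntropy, Nat.cast_ne_zero.mpr hn.ne']

lemma lNorm_uniform (hn : 0 < n) {α : ℝ} (hα : α ≠ 0) :
    lNorm α (fun _ : Fin n => 1 / (n : ℝ)) = (n : ℝ) ^ (1 / α - 1) := by
  have hn' : (0 : ℝ) < n := by exact_mod_cast hn
  calc lNorm α (fun _ : Fin n => 1 / (n : ℝ))
      = ((n : ℝ) * (n : ℝ) ^ (-α)) ^ (1 / α) := by
        simp [lNorm, Real.inv_rpow hn'.le, Real.rpow_neg hn'.le]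
    _ = ((n : ℝ) ^ (1 - α)) ^ (1 / α) := by
        rw [sub_eq_add_neg, Real.rpow_add hn', Real.rpow_one]
    _ = (n : ℝ) ^ (1 / α - 1) := by
        rw [← Real.rpow_mul hn'.le]
        congr 1
        field_simp

end vVec

section chord

variable {a b h : ℝ}

lemma chord_weight_mem_Icc (hah : a ≤ h) (hhb : h ≤ b) (hab : a < b) :
    (b - h) / (b - a) ∈ Set.Icc (0 : ℝ) 1 :=
  ⟨div_nonneg (by linarith) (by linarith), (div_le_one (by linarith)).mpr (by linarith)⟩

lemma chord_weight_combination (hab : a ≠ b) :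
    (b - h) / (b - a) * a + (1 - (b - h) / (b - a)) * b = h := by
  have : b - a ≠ 0 := sub_ne_zero.mpr hab.symm
  field_simp
  ring

end chord

theorem stmt12_general (n : ℕ) (α : ℝ)
    (hα : α ∈ Set.Ico (1 / 2 : ℝ) 1 ∪ Set.Ioi 1)
    (pstar : ℝ) (hps : pstar ∈ Set.Ioo (0 : ℝ) (1 / (n : ℝ)))
    (L : ℝ → ℝ)
    (hL1 : ∀ p ∈ Set.Icc (0 : ℝ) (1 / (n : ℝ)), Hv n p ≤ Hv n pstar →
      L (Hv n p) = lNorm α (vVec n p))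
    (hL2 : ∀ h ∈ Set.Icc (0 : ℝ) (Real.log n), Hv n pstar < h →
      L h = ((Real.log n - h) / (Real.log n - Hv n pstar)) * lNorm α (vVec n pstar) +
        (1 - (Real.log n - h) / (Real.log n - Hv n pstar)) * (n : ℝ) ^ (1 / α - 1)) :
    (∀ h ∈ Set.Icc (0 : ℝ) (Real.log n),
      ∃ t ∈ Set.Icc (0 : ℝ) 1, ∃ p₀ p₁ : Fin n → ℝ, IsProbVec p₀ ∧ IsProbVec p₁ ∧
        t * shannonEntropy p₀ + (1 - t) * shannonEntropy p₁ = h ∧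
        t * lNorm α p₀ + (1 - t) * lNorm α p₁ = L h) ∧
    (∀ h ∈ Set.Icc (0 : ℝ) (Real.log n), h ≤ Hv n pstar →
      ∀ p ∈ Set.Icc (0 : ℝ) (1 / (n : ℝ)), Hv n p = h →
        shannonEntropy (vVec n p) = h ∧ lNorm α (vVec n p) = L h) ∧
    (∀ h ∈ Set.Icc (0 : ℝ) (Real.log n), Hv n pstar < h →
      ((Real.log n - h) / (Real.log n - Hv n pstar)) * shannonEntropy (vVec n pstar) +
          (1 - (Real.log n - h) / (Real.log n - Hv n pstar)) *
            shannonEntropy (fun _ : Fin n => 1 / (n : ℝ)) = h ∧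
      ((Real.log n - h) / (Real.log n - Hv n pstar)) * lNorm α (vVec n pstar) +
          (1 - (Real.log n - h) / (Real.log n - Hv n pstar)) *
            lNorm α (fun _ : Fin n => 1 / (n : ℝ)) = L h) := by
  have hn : 0 < n := by exact_mod_cast one_div_pos.mp (hps.1.trans hps.2)
  have hα0 : α ≠ 0 := by
    rcases hα with hα | hα
    · linarith [hα.1]
    · linarith [Set.mem_Ioi.mp hα]
  refine ⟨fun h hh => ?_, ?_, ?_⟩
  · rcases le_or_gt h (Hv n pstar) with hle | hlt
    · obtain ⟨p, hp, rfl⟩ := exists_Hv_eq hn hh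
      exact ⟨1, by simp, vVec n p, vVec n p, vVec_isProbVec hn hp, vVec_isProbVec hn hp,
        by simp [Hv], by simp [hL1 p hp hle]⟩
    · refine ⟨_, chord_weight_mem_Icc hlt.le hh.2 (hlt.trans_le hh.2), vVec n pstar, _,
        vVec_isProbVec hn (Set.Ioo_subset_Icc_self hps), isProbVec_uniform hn, ?_, ?_⟩
      · rw [shannonEntropy_uniform hn]
        exact chord_weight_combination (hlt.trans_le hh.2).ne
      · rw [lNorm_uniform hn hα0, hL2 h hh hlt]
  · rintro h - hle p hp rfl
    exact ⟨rfl, (hL1 p hp hle).symm⟩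
  · intro h hh hlt
    constructor
    · rw [shannonEntropy_uniform hn]
      exact chord_weight_combination (hlt.trans_le hh.2).ne
    · rw [lNorm_uniform hn hα0, hL2 h hh hlt]

theorem stmt12 (n : ℕ) (hn : 3 ≤ n) (α : ℝ)
    (hα : α ∈ Set.Ico (1 / 2 : ℝ) 1 ∪ Set.Ioi 1)
    (pstar : ℝ) (hps : pstar ∈ Set.Ioo (0 : ℝ) (1 / (n : ℝ)))
    (hpt : TangencyEq n α pstar)
    (L : ℝ → ℝ)
    (hL1 : ∀ p ∈ Set.Icc (0 : ℝ) (1 / (n : ℝ)), Hv n p ≤ Hv n pstar →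
      L (Hv n p) = lNorm α (vVec n p))
    (hL2 : ∀ h ∈ Set.Icc (0 : ℝ) (Real.log n), Hv n pstar < h →
      L h = ((Real.log n - h) / (Real.log n - Hv n pstar)) * lNorm α (vVec n pstar) +
        (1 - (Real.log n - h) / (Real.log n - Hv n pstar)) * (n : ℝ) ^ (1 / α - 1)) :
    (∀ h ∈ Set.Icc (0 : ℝ) (Real.log n),
      ∃ t ∈ Set.Icc (0 : ℝ) 1, ∃ p₀ p₁ : Fin n → ℝ, IsProbVec p₀ ∧ IsProbVec p₁ ∧
        t * shannonEntropy p₀ + (1 - t) * shannonEntropy p₁ = h ∧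
        t * lNorm α p₀ + (1 - t) * lNorm α p₁ = L h) ∧
    (∀ h ∈ Set.Icc (0 : ℝ) (Real.log n), h ≤ Hv n pstar →
      ∀ p ∈ Set.Icc (0 : ℝ) (1 / (n : ℝ)), Hv n p = h →
        shannonEntropy (vVec n p) = h ∧ lNorm α (vVec n p) = L h) ∧
    (∀ h ∈ Set.Icc (0 : ℝ) (Real.log n), Hv n pstar < h →
      ((Real.log n - h) / (Real.log n - Hv n pstar)) * shannonEntropy (vVec n pstar) +
          (1 - (Real.log n - h) / (Real.log n - Hv n pstar)) *
            shannonEntropy (fun _ : Fin n => 1 / (n : ℝ)) = h ∧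
      ((Real.log n - h) / (Real.log n - Hv n pstar)) * lNorm α (vVec n pstar) +
          (1 - (Real.log n - h) / (Real.log n - Hv n pstar)) *
            lNorm α (fun _ : Fin n => 1 / (n : ℝ)) = L h) :=
  stmt12_general n α hα pstar hps L hL1 hL2
end

section
/- Consider g(n, p, 0) = −1 + n·(1 − n·p)/ln((1 − (n−1)p)/p), defined for p ∈ (0, 1/(n−1)) with p ≠ 1/n. For n = 2, g(2, p, 0) < 0 for all p ∈ (0, 1/2) ∪ (1/2, 1). For each integer n ≥ 3 there exists κ ∈ (e^{−n}, 1/(n(n−1))) such that g(n, p, 0) > 0 for p ∈ (κ, 1/n), g(n, κ, 0) = 0, and g(n, p, 0) < 0 for p ∈ (0, κ) ∪ (1/n, 1/(n−1)). -/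
/-!
Write `L(p) = log((1 - (n-1)p)/p)` and `H(p) = n(1 - np) - L(p)` (`g0Num`), so that `g = H / L`.
`L` is positive below `1/n` and negative above it, while
`H'(p) = (n(n-1)p - 1)(np - 1) / (p (1 - (n-1)p))`: `H` increases up to `1/(n(n-1))`, decreases
up to `1/n`, where it vanishes, and increases again. For `n = 2` the two turning points coincide,
so `H` changes sign only at `1/2`, exactly where `L` does. For `n ≥ 3`, `H(e^{-n}) < 0` by
`log x ≥ 1 - 1/x` and `H(1/(n(n-1))) > H(1/n) = 0`, which produces the root `κ`.
-/

open Real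

/-- `g(n, p, 0) = −1 + n·(1 − n·p)/ln((1 − (n−1)p)/p)`. -/
noncomputable def g0 (n : ℕ) (p : ℝ) : ℝ :=
  -1 + (n : ℝ) * (1 - (n : ℝ) * p) / Real.log ((1 - ((n : ℝ) - 1) * p) / p)

open Set

noncomputable def g0Num (N p : ℝ) : ℝ :=
  N * (1 - N * p) - log ((1 - (N - 1) * p) / p)

lemma g0_eq_div {n : ℕ} {p : ℝ} (h : log ((1 - ((n : ℝ) - 1) * p) / p) ≠ 0) :
    g0 n p = g0Num n p / log ((1 - ((n : ℝ) - 1) * p) / p) := by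
  rw [g0, g0Num, eq_div_iff h, add_mul, div_mul_cancel₀ _ h]
  ring

section

variable {N p : ℝ}

lemma hasDerivAt_g0Num (hp : 0 < p) (hq : 0 < 1 - (N - 1) * p) :
    HasDerivAt (g0Num N)
      ((N * (N - 1) * p - 1) * (N * p - 1) / (p * (1 - (N - 1) * p))) p := by
  have hratio : HasDerivAt (fun x => (1 - (N - 1) * x) / x) (-1 / p ^ 2) p :=
    (((hasDerivAt_id' p).const_mul (N - 1)).const_sub 1).div (hasDerivAt_id' p) hp.ne'
      |>.congr_deriv (by ring)
  have h : HasDerivAt (fun x => N * (1 - N * x) - log ((1 - (N - 1) * x) / x))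
      (N * -N - -1 / p ^ 2 / ((1 - (N - 1) * p) / p)) p :=
    (((hasDerivAt_id' p).const_mul N).const_sub 1).const_mul N |>.sub
      (hratio.log (div_pos hq hp).ne') |>.congr_deriv (by ring)
  refine h.congr_deriv ?_
  generalize hq_def : 1 - (N - 1) * p = q at hq ⊢
  field_simp
  rw [← hq_def]
  ring

lemma sub_one_mul_lt_one (hN : 1 < N) (hp : p < 1 / (N - 1)) : (N - 1) * p < 1 := by
  rwa [lt_div_iff₀' (by linarith)] at hp

lemma continuousOn_g0Num (hN : 1 < N) : ContinuousOn (g0Num N) (Ioo 0 (1 / (N - 1))) :=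
  fun _ hp => (hasDerivAt_g0Num hp.1 (sub_pos.2 (sub_one_mul_lt_one hN hp.2))).continuousAt
    |>.continuousWithinAt

lemma strictMonoOn_g0Num (hN : 1 < N) {s : Set ℝ} (hs : Convex ℝ s)
    (hsub : s ⊆ Ioo 0 (1 / (N - 1)))
    (hpos : ∀ p ∈ interior s, 0 < (N * (N - 1) * p - 1) * (N * p - 1)) :
    StrictMonoOn (g0Num N) s := by
  refine strictMonoOn_of_deriv_pos hs ((continuousOn_g0Num hN).mono hsub) fun p hp => ?_
  obtain ⟨hp0, hpc⟩ := hsub (interior_subset hp)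
  have hq := sub_pos.2 (sub_one_mul_lt_one hN hpc)
  rw [(hasDerivAt_g0Num hp0 hq).deriv]
  exact div_pos (hpos p hp) (mul_pos hp0 hq)

lemma strictAntiOn_g0Num (hN : 1 < N) {s : Set ℝ} (hs : Convex ℝ s)
    (hsub : s ⊆ Ioo 0 (1 / (N - 1)))
    (hneg : ∀ p ∈ interior s, (N * (N - 1) * p - 1) * (N * p - 1) < 0) :
    StrictAntiOn (g0Num N) s := by
  refine strictAntiOn_of_deriv_neg hs ((continuousOn_g0Num hN).mono hsub) fun p hp => ?_
  obtain ⟨hp0, hpc⟩ := hsub (interior_subset hp)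
  have hq := sub_pos.2 (sub_one_mul_lt_one hN hpc)
  rw [(hasDerivAt_g0Num hp0 hq).deriv]
  exact div_neg_of_neg_of_pos (hneg p hp) (mul_pos hp0 hq)

lemma strictMonoOn_g0Num_Ioc (hN : 2 ≤ N) :
    StrictMonoOn (g0Num N) (Ioc 0 (1 / (N * (N - 1)))) := by
  have hN1 : 0 < N - 1 := by linarith
  refine strictMonoOn_g0Num (by linarith) (convex_Ioc _ _) (fun p hp => ⟨hp.1, ?_⟩) ?_
  · refine hp.2.trans_lt (one_div_lt_one_div_of_lt hN1 ?_)
    nlinarith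
  · rw [interior_Ioc]
    rintro p ⟨hp0, hpa⟩
    rw [lt_div_iff₀ (by positivity)] at hpa
    exact mul_pos_of_neg_of_neg (by linarith) (by nlinarith)

lemma strictAntiOn_g0Num_Icc (hN : 1 < N) :
    StrictAntiOn (g0Num N) (Icc (1 / (N * (N - 1))) (1 / N)) := by
  have hN1 : 0 < N - 1 := by linarith
  refine strictAntiOn_g0Num hN (convex_Icc _ _) (fun p hp => ⟨?_, ?_⟩) ?_
  · exact (by positivity : (0 : ℝ) < 1 / (N * (N - 1))).trans_le hp.1
  · exact hp.2.trans_lt (one_div_lt_one_div_of_lt hN1 (by linarith))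
  · rw [interior_Icc]
    rintro p ⟨hap, hpb⟩
    rw [div_lt_iff₀ (by positivity)] at hap
    rw [lt_div_iff₀ (by positivity)] at hpb
    exact mul_neg_of_pos_of_neg (by linarith) (by linarith)

lemma strictMonoOn_g0Num_Ico (hN : 2 ≤ N) :
    StrictMonoOn (g0Num N) (Ico (1 / N) (1 / (N - 1))) := by
  refine strictMonoOn_g0Num (by linarith) (convex_Ico _ _)
    (fun p hp => ⟨(by positivity : (0 : ℝ) < 1 / N).trans_le hp.1, hp.2⟩) ?_
  rw [interior_Ico]
  rintro p ⟨hbp, -⟩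
  rw [div_lt_iff₀ (by positivity)] at hbp
  exact mul_pos (by nlinarith) (by linarith)

lemma g0Num_one_div_self (hN : N ≠ 0) : g0Num N (1 / N) = 0 := by
  have : (1 - (N - 1) * (1 / N)) / (1 / N) = 1 := by field_simp; ring
  rw [g0Num, this, log_one]
  field_simp
  ring

lemma g0Num_exp_neg_lt_zero (hN : 0 < N) : g0Num N (exp (-N)) < 0 := by
  set E := exp (-N) with hE
  have hE0 : 0 < E := exp_pos _
  have hEexp : E * exp N = 1 := by rw [hE, ← exp_add, neg_add_cancel, exp_zero]
  have hNE : N * E < 1 := by nlinarith [add_one_le_exp N]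
  have hq : 0 < 1 - (N - 1) * E := by linarith
  have hlog : -log (1 - (N - 1) * E) ≤ (N - 1) * E / (1 - (N - 1) * E) := by
    have := one_sub_inv_le_log_of_pos hq
    have h' : (1 - (N - 1) * E)⁻¹ - 1 = (N - 1) * E / (1 - (N - 1) * E) := by
      field_simp; ring
    linarith
  have hfrac : (N - 1) * E / (1 - (N - 1) * E) < N ^ 2 * E := by
    rw [div_lt_iff₀ hq]
    nlinarith [mul_pos hE0 hN, mul_pos (mul_pos hE0 hN) (sub_pos.2 hNE)]
  rw [g0Num, log_div hq.ne' hE0.ne', hE, log_exp, ← hE]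
  nlinarith

lemma exp_neg_lt_one_div_mul_sub_one (hN : 1 < N) : exp (-N) < 1 / (N * (N - 1)) := by
  have htaylor := sum_le_exp_of_nonneg (by linarith : (0 : ℝ) ≤ N) 4
  norm_num [Finset.sum_range_succ, Nat.factorial] at htaylor
  rw [exp_neg, ← one_div, one_div_lt_one_div (exp_pos N) (by nlinarith)]
  nlinarith [sq_nonneg (N - 3)]

lemma exists_root_g0Num (hN : 2 < N) :
    ∃ κ ∈ Ioo (exp (-N)) (1 / (N * (N - 1))), g0Num N κ = 0 ∧
      (∀ p ∈ Ioo 0 κ, g0Num N p < 0) ∧ (∀ p ∈ Ioo κ (1 / N), 0 < g0Num N p) := by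
  have hN0 : 0 < N := by linarith
  have hN1 : 0 < N - 1 := by linarith
  set a := 1 / (N * (N - 1))
  have hab : a < 1 / N := one_div_lt_one_div_of_lt hN0 (by nlinarith)
  have hEa : exp (-N) < a := exp_neg_lt_one_div_mul_sub_one (by linarith)
  have hmono := strictMonoOn_g0Num_Ioc hN.le
  have hanti := strictAntiOn_g0Num_Icc (by linarith : 1 < N)
  have hzero := g0Num_one_div_self hN0.ne'
  have hga : 0 < g0Num N a := hzero ▸ hanti ⟨le_rfl, hab.le⟩ ⟨hab.le, le_rfl⟩ hab
  have hcont : ContinuousOn (g0Num N) (Icc (exp (-N)) a) :=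
    (continuousOn_g0Num (by linarith)).mono fun p hp =>
      ⟨(exp_pos _).trans_le hp.1, hp.2.trans_lt (one_div_lt_one_div_of_lt hN1 (by nlinarith))⟩
  obtain ⟨κ, hκ, hroot⟩ :=
    intermediate_value_Ioo hEa.le hcont ⟨g0Num_exp_neg_lt_zero hN0, hga⟩
  have hκ0 : 0 < κ := (exp_pos _).trans hκ.1
  refine ⟨κ, hκ, hroot, fun p hp => ?_, fun p hp => ?_⟩
  · exact hroot ▸ hmono ⟨hp.1, (hp.2.trans hκ.2).le⟩ ⟨hκ0, hκ.2.le⟩ hp.2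
  · rcases le_or_gt p a with hpa | hap
    · exact hroot ▸ hmono ⟨hκ0, hκ.2.le⟩ ⟨hκ0.trans hp.1, hpa⟩ hp.1
    · exact hzero ▸ hanti ⟨hap.le, hp.2.le⟩ ⟨hab.le, le_rfl⟩ hp.2

lemma g0Num_pos_of_mem_Ioo (hN : 2 ≤ N) (hp : p ∈ Ioo (1 / N) (1 / (N - 1))) :
    0 < g0Num N p :=
  g0Num_one_div_self (by linarith : N ≠ 0) ▸
    strictMonoOn_g0Num_Ico hN ⟨le_rfl, hp.1.trans hp.2⟩ ⟨hp.1.le, hp.2⟩ hp.1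

lemma g0Num_two_neg (hp : p ∈ Ioo 0 (1 / 2)) : g0Num 2 p < 0 := by
  have hmono := strictMonoOn_g0Num_Ioc (le_refl (2 : ℝ))
  rw [show (2 : ℝ) * (2 - 1) = 2 by norm_num] at hmono
  exact g0Num_one_div_self two_ne_zero ▸ hmono ⟨hp.1, hp.2.le⟩ ⟨by norm_num, le_rfl⟩ hp.2

end

section

variable {n : ℕ} {p : ℝ}

lemma sign_g0_of_mem_Ioo_zero_inv (hp : p ∈ Ioo 0 (1 / (n : ℝ))) :
    SignType.sign (g0 n p) = SignType.sign (g0Num n p) := by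
  have hlog : 0 < log ((1 - ((n : ℝ) - 1) * p) / p) := by
    refine log_pos ((one_lt_div hp.1).2 ?_)
    have := hp.2
    rw [lt_div_iff₀ (one_div_pos.1 (hp.1.trans hp.2))] at this
    linarith
  rw [g0_eq_div hlog.ne', div_eq_mul_inv, sign_mul, sign_pos (inv_pos.2 hlog), mul_one]

lemma sign_g0_of_mem_Ioo_inv (hp : p ∈ Ioo (1 / (n : ℝ)) (1 / ((n : ℝ) - 1))) :
    SignType.sign (g0 n p) = -SignType.sign (g0Num n p) := by
  have hn : 0 < (n : ℝ) - 1 :=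
    one_div_pos.1 ((by positivity : (0 : ℝ) ≤ 1 / n).trans_lt (hp.1.trans hp.2))
  have hp0 : 0 < p := (by positivity : (0 : ℝ) ≤ 1 / n).trans_lt hp.1
  have hq : 0 < 1 - ((n : ℝ) - 1) * p := sub_pos.2 (sub_one_mul_lt_one (by linarith) hp.2)
  have hlog : log ((1 - ((n : ℝ) - 1) * p) / p) < 0 := by
    refine log_neg (div_pos hq hp0) ((div_lt_one hp0).2 ?_)
    have := hp.1
    rw [div_lt_iff₀ (by linarith)] at this
    linarith
  rw [g0_eq_div hlog.ne, div_eq_mul_inv, sign_mul, sign_neg (inv_lt_zero.2 hlog), mul_neg_one]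

end

theorem stmt16 :
    (∀ p : ℝ, p ∈ Set.Ioo (0 : ℝ) (1 / 2) ∪ Set.Ioo (1 / 2 : ℝ) 1 → g0 2 p < 0) ∧
    (∀ n : ℕ, 3 ≤ n →
      ∃ κ ∈ Set.Ioo (Real.exp (-(n : ℝ))) (1 / ((n : ℝ) * ((n : ℝ) - 1))),
        (∀ p ∈ Set.Ioo κ (1 / (n : ℝ)), 0 < g0 n p) ∧
        g0 n κ = 0 ∧
        (∀ p : ℝ, p ∈ Set.Ioo (0 : ℝ) κ ∪ Set.Ioo (1 / (n : ℝ)) (1 / ((n : ℝ) - 1)) →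
          g0 n p < 0)) := by
  refine ⟨fun p hp => ?_, fun n hn => ?_⟩
  · rw [← sign_eq_neg_one_iff]
    rcases hp with hp | hp
    · rw [sign_g0_of_mem_Ioo_zero_inv (by norm_num [hp.1, hp.2]), sign_eq_neg_one_iff]
      exact_mod_cast g0Num_two_neg hp
    · rw [sign_g0_of_mem_Ioo_inv (by norm_num [hp.1, hp.2]), neg_inj, sign_eq_one_iff]
      exact g0Num_pos_of_mem_Ioo (by norm_num) (by norm_num [hp.1, hp.2])
  · have hN : (2 : ℝ) < n := by exact_mod_cast hn
    obtain ⟨κ, hκ, hroot, hneg, hpos⟩ := exists_root_g0Num hN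
    have hκ0 : 0 < κ := (exp_pos _).trans hκ.1
    have hκn : κ < 1 / n :=
      hκ.2.trans (one_div_lt_one_div_of_lt (by linarith) (by nlinarith))
    refine ⟨κ, hκ, fun p hp => ?_, ?_, fun p hp => ?_⟩
    · rw [← sign_eq_one_iff, sign_g0_of_mem_Ioo_zero_inv ⟨hκ0.trans hp.1, hp.2⟩,
        sign_eq_one_iff]
      exact hpos p hp
    · rw [← _root_.sign_eq_zero_iff, sign_g0_of_mem_Ioo_zero_inv ⟨hκ0, hκn⟩,
        _root_.sign_eq_zero_iff, hroot]
    · rw [← sign_eq_neg_one_iff]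
      rcases hp with hp | hp
      · rw [sign_g0_of_mem_Ioo_zero_inv ⟨hp.1, hp.2.trans hκn⟩, sign_eq_neg_one_iff]
        exact hneg p hp
      · rw [sign_g0_of_mem_Ioo_inv hp, neg_inj, sign_eq_one_iff]
        exact g0Num_pos_of_mem_Ioo hN.le hp
end

section
/- Fix an integer n ≥ 3 and let G(z, α) denote the mixed second partial derivative ∂²g(n, z, α)/∂z∂α (first differentiate g in α, then in z), for z ∈ (0,1) ∪ (1,∞) and real α. With z₁(β) = (n−1)^{1/β} for β ≠ 0 and z₂(α) = (n−1)^{1/(2α−1)} for α ≠ 1/2, the following hold (z always ranging over (0,1) ∪ (1,∞)): (i) for each α < 0 there exists γ ∈ (z₁(2α), z₂(α)) such that G(z, α) > 0 for z < γ, G(γ, α) = 0, and G(z, α) < 0 for z > γ; (ii) G(z, 0) < 0 for all z; (iii) for each α ∈ (0, 1/2) there exists γ ∈ (n−1, z₁(2α)) such that G(z, α) < 0 for z < γ, G(γ, α) = 0, and G(z, α) > 0 for z > γ; (iv) G(z, 1/2) < 0 for z < n−1, G(n−1, 1/2) = 0, and G(z, 1/2) > 0 for z > n−1; (v) for each α ∈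 (1/2, 1) there exists γ ∈ (z₁(2α), n−1) such that G(z, α) < 0 for z < γ, G(γ, α) = 0, and G(z, α) > 0 for z > γ; (vi) G(z, 1) = 0 for all z; (vii) for each α > 1 there exists γ ∈ (z₁(2α), z₂(α)) such that G(z, α) > 0 for z < γ, G(γ, α) = 0, and G(z, α) < 0 for z > γ. -/
open Real

/-- `g(n, z, α) = (α−1) + ((n−1) + z^α)(z^{1−α} − 1)/(((n−1) + z) ln z)`. -/
noncomputable def gZ (n : ℕ) (z α : ℝ) : ℝ :=
  (α - 1) + (((n : ℝ) - 1) + z ^ α) * (z ^ (1 - α) - 1) / ((((n : ℝ) - 1) + z) * Real.log z)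

/-- The mixed second partial derivative `∂²g/∂z∂α`: first differentiate `g` in `α`,
then in `z`. -/
noncomputable def Gmix (n : ℕ) (z α : ℝ) : ℝ :=
  deriv (fun z' => deriv (fun a => gZ n z' a) α) z

/-!
Write `b = n - 1`. Differentiating in `α` removes the logarithm:
`∂g/∂α = 1 - (b z^{1-α} + z^α) / (b + z)`, and then `∂²g/∂z∂α = z^{-α} F(z) / (b + z)²` with
`F(z) = α b (z - z^{2α-1}) + (1 - α)(z^{2α} - b²)`. So everything is about the sign of `F` on
`z > 0`. The function `F` is strictly decreasing for `α < 0`, strictly increasing for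
`0 < α < 1/2`, strictly convex and negative on `(0, 1]` for `1/2 < α < 1`, and strictly concave
and positive on `(0, 1]` for `α > 1`; in each case a zero of `F` is a sign change, and the
intermediate value theorem between two of the points `z₁ = b^{1/(2α)}`, `z₂ = b^{1/(2α-1)}`, `b`
produces one. The sign of `F(z₁) = α b φ(1/(2α))` comes from
`φ(t) = b^t - b^{1-t} - (2t - 1)(b - 1)`, which vanishes at `0` and `1/2`, is strictly concave on
`t ≤ 1/2` and satisfies `φ(1 - t) = -φ(t)`.
-/

open Set

/-- The function `F` above. -/
noncomputable def mixedNumerator (b α z : ℝ) : ℝ :=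
  α * b * (z - z ^ (2 * α - 1)) + (1 - α) * (z ^ (2 * α) - b ^ 2)

/-- The function `φ` above: the gap between `t ↦ b^t - b^{1-t}` and its chord over `[0, 1]`. -/
noncomputable def chordGap (b t : ℝ) : ℝ :=
  b ^ t - b ^ (1 - t) - (2 * t - 1) * (b - 1)

def SignChangesUpAt (f : ℝ → ℝ) (s : Set ℝ) (γ : ℝ) : Prop :=
  (∀ z ∈ s, z < γ → f z < 0) ∧ f γ = 0 ∧ ∀ z ∈ s, γ < z → 0 < f z

section SignChange

variable {f g c : ℝ → ℝ} {s t : Set ℝ} {x γ : ℝ}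

lemma signChangesUpAt_neg_iff :
    SignChangesUpAt (-f) s γ ↔
      (∀ z ∈ s, z < γ → 0 < f z) ∧ f γ = 0 ∧ ∀ z ∈ s, γ < z → f z < 0 := by
  simp only [SignChangesUpAt, Pi.neg_apply, neg_lt_zero, neg_eq_zero, neg_pos]

lemma SignChangesUpAt.of_pos_mul (h : SignChangesUpAt f t γ) (hst : s ⊆ t) (hγ : γ ∈ s)
    (hc : ∀ z ∈ s, 0 < c z) (hg : ∀ z ∈ s, g z = c z * f z) : SignChangesUpAt g s γ := by
  obtain ⟨hlt, h0, hgt⟩ := h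
  refine ⟨fun z hz hzγ => ?_, by rw [hg γ hγ, h0, mul_zero], fun z hz hγz => ?_⟩
  · rw [hg z hz]
    exact mul_neg_of_pos_of_neg (hc z hz) (hlt z (hst hz) hzγ)
  · rw [hg z hz]
    exact mul_pos (hc z hz) (hgt z (hst hz) hγz)

lemma StrictMonoOn.signChangesUpAt (hf : StrictMonoOn f s) (hγ : γ ∈ s) (h0 : f γ = 0) :
    SignChangesUpAt f s γ :=
  ⟨fun _ hz hzγ => h0 ▸ hf hz hγ hzγ, h0, fun _ hz hγz => h0 ▸ hf hγ hz hγz⟩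

lemma StrictConvexOn.signChangesUpAt (hf : StrictConvexOn ℝ s f) (hx : x ∈ s) (hγ : γ ∈ s)
    (hxγ : x < γ) (hneg : ∀ z ∈ s, z ≤ x → f z < 0) (h0 : f γ = 0) :
    SignChangesUpAt f s γ := by
  have hfx := hneg x hx le_rfl
  refine ⟨fun z hz hzγ => ?_, h0, fun z hz hγz => ?_⟩
  · rcases le_or_gt z x with hzx | hxz
    · exact hneg z hz hzx
    · have := hf.lt_on_openSegment hx hγ hxγ.ne (by rw [openSegment_eq_Ioo hxγ]; exact ⟨hxz, hzγ⟩)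
      rw [h0] at this
      exact this.trans_le (max_le hfx.le le_rfl)
  · have hxz := hxγ.trans hγz
    have := hf.lt_on_openSegment hx hz hxz.ne (by rw [openSegment_eq_Ioo hxz]; exact ⟨hxγ, hγz⟩)
    rw [h0] at this
    exact (lt_max_iff.1 this).resolve_left hfx.not_gt

end SignChange

lemma hasDerivAt_const_rpow_one_sub {b : ℝ} (hb : 0 < b) (t : ℝ) :
    HasDerivAt (fun t => b ^ (1 - t)) (-(b ^ (1 - t) * log b)) t := by
  simpa [mul_comm, Function.comp_def] using
    (hasStrictDerivAt_const_rpow hb (1 - t)).hasDerivAt.comp t ((hasDerivAt_id t).const_sub 1)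

section ChordGap

variable {b t : ℝ}

lemma chordGap_one_sub (b t : ℝ) : chordGap b (1 - t) = -chordGap b t := by
  simp only [chordGap, sub_sub_cancel]
  ring

lemma hasDerivAt_chordGap (hb : 0 < b) (t : ℝ) :
    HasDerivAt (chordGap b) ((b ^ t + b ^ (1 - t)) * log b - 2 * (b - 1)) t := by
  have hlin : HasDerivAt (fun t => (2 * t - 1) * (b - 1)) (2 * (b - 1)) t := by
    simpa using (((hasDerivAt_id t).const_mul 2).sub_const 1).mul_const (b - 1)
  unfold chordGap
  exact (((hasStrictDerivAt_const_rpow hb t).hasDerivAt.sub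
    (hasDerivAt_const_rpow_one_sub hb t)).sub hlin).congr_deriv (by ring)

lemma deriv2_chordGap (hb : 0 < b) (t : ℝ) :
    deriv^[2] (chordGap b) t = (b ^ t - b ^ (1 - t)) * log b ^ 2 := by
  have hd : deriv (chordGap b) = fun t => (b ^ t + b ^ (1 - t)) * log b - 2 * (b - 1) :=
    funext fun t => (hasDerivAt_chordGap hb t).deriv
  have hd2 : HasDerivAt (fun t => (b ^ t + b ^ (1 - t)) * log b - 2 * (b - 1))
      ((b ^ t - b ^ (1 - t)) * log b ^ 2) t :=
    ((((hasStrictDerivAt_const_rpow hb t).hasDerivAt.add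
      (hasDerivAt_const_rpow_one_sub hb t)).mul_const (log b)).sub_const (2 * (b - 1))).congr_deriv
      (by ring)
  rw [Function.iterate_succ_apply, Function.iterate_one, hd, hd2.deriv]

lemma strictConcaveOn_chordGap (hb : 1 < b) : StrictConcaveOn ℝ (Iic (1 / 2)) (chordGap b) := by
  refine strictConcaveOn_of_deriv2_neg (convex_Iic _)
    (fun t _ => (hasDerivAt_chordGap (by linarith) t).continuousAt.continuousWithinAt) ?_
  rw [interior_Iic]
  intro t ht
  rw [deriv2_chordGap (by linarith)]
  have hlt : b ^ t < b ^ (1 - t) := rpow_lt_rpow_of_exponent_lt hb (by linarith [mem_Iio.1 ht])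
  exact mul_neg_of_neg_of_pos (by linarith) (pow_pos (log_pos hb) 2)

lemma chordGap_zero : chordGap b 0 = 0 := by simp [chordGap]

lemma chordGap_half : chordGap b (1 / 2) = 0 := by norm_num [chordGap]

lemma chordGap_neg_of_neg (hb : 1 < b) (ht : t < 0) : chordGap b t < 0 := by
  have := (strictConcaveOn_chordGap hb).lt_on_openSegment (x := t) (y := 1 / 2) (z := 0)
    (mem_Iic.2 (by linarith)) (mem_Iic.2 le_rfl) (by linarith)
    (by rw [openSegment_eq_Ioo (by linarith)]; exact ⟨ht, by norm_num⟩)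
  rw [chordGap_zero, chordGap_half] at this
  exact (min_lt_iff.1 this).resolve_right (lt_irrefl 0)

lemma chordGap_pos (hb : 1 < b) (ht0 : 0 < t) (ht : t < 1 / 2) : 0 < chordGap b t := by
  have := (strictConcaveOn_chordGap hb).lt_on_openSegment (x := 0) (y := 1 / 2) (z := t)
    (mem_Iic.2 (by norm_num)) (mem_Iic.2 le_rfl) (by norm_num)
    (by rw [openSegment_eq_Ioo (by norm_num)]; exact ⟨ht0, ht⟩)
  rwa [chordGap_zero, chordGap_half, min_self] at this

lemma chordGap_neg_of_half_lt (hb : 1 < b) (ht : 1 / 2 < t) (ht1 : t < 1) : chordGap b t < 0 := by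
  have := chordGap_pos hb (t := 1 - t) (by linarith) (by linarith)
  rwa [chordGap_one_sub, neg_pos] at this

lemma chordGap_pos_of_one_lt (hb : 1 < b) (ht : 1 < t) : 0 < chordGap b t := by
  have := chordGap_neg_of_neg hb (t := 1 - t) (by linarith)
  rwa [chordGap_one_sub, neg_lt_zero] at this

end ChordGap

section MixedNumerator

variable {b α : ℝ}

lemma hasDerivAt_mixedNumerator (b α : ℝ) {z : ℝ} (hz : 0 < z) :
    HasDerivAt (mixedNumerator b α)
      (α * b * (1 - (2 * α - 1) * z ^ (2 * α - 2)) + 2 * α * (1 - α) * z ^ (2 * α - 1)) z := by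
  have h1 := hasDerivAt_rpow_const (p := 2 * α - 1) (Or.inl hz.ne')
  have h2 := hasDerivAt_rpow_const (p := 2 * α) (Or.inl hz.ne')
  unfold mixedNumerator
  refine ((((hasDerivAt_id z).sub h1).const_mul (α * b)).add
    ((h2.sub_const (b ^ 2)).const_mul (1 - α))).congr_deriv ?_
  rw [show 2 * α - 1 - 1 = 2 * α - 2 by ring]
  ring

lemma continuousOn_mixedNumerator (b α : ℝ) : ContinuousOn (mixedNumerator b α) (Ioi 0) :=
  fun _ hz => (hasDerivAt_mixedNumerator b α hz).continuousAt.continuousWithinAt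

lemma mixedNumerator_zero (b z : ℝ) : mixedNumerator b 0 z = 1 - b ^ 2 := by
  simp [mixedNumerator]

lemma mixedNumerator_half (b z : ℝ) : mixedNumerator b (1 / 2) z = (b + 1) / 2 * (z - b) := by
  norm_num [mixedNumerator]
  ring

lemma mixedNumerator_one (b z : ℝ) : mixedNumerator b 1 z = 0 := by
  norm_num [mixedNumerator]

lemma mixedNumerator_self (hb : 0 < b) (α : ℝ) :
    mixedNumerator b α b = (2 * α - 1) * (b ^ 2 - b ^ (2 * α)) := by
  rw [mixedNumerator, rpow_sub hb, rpow_one]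
  field_simp
  ring

lemma mixedNumerator_rpow_one_div_two_mul (hb : 0 < b) (hα : α ≠ 0) :
    mixedNumerator b α (b ^ (1 / (2 * α))) = α * b * chordGap b (1 / (2 * α)) := by
  have e1 : (b ^ (1 / (2 * α))) ^ (2 * α) = b := by
    rw [← rpow_mul hb.le, one_div_mul_cancel (by simpa using hα), rpow_one]
  have e2 : (b ^ (1 / (2 * α))) ^ (2 * α - 1) = b ^ (1 - 1 / (2 * α)) := by
    rw [← rpow_mul hb.le]
    congr 1
    field_simp
  rw [mixedNumerator, chordGap, e1, e2]
  field_simp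
  ring

lemma mixedNumerator_rpow_one_div_two_mul_sub_one (hb : 0 < b) (hα : 2 * α - 1 ≠ 0) :
    mixedNumerator b α (b ^ (1 / (2 * α - 1))) = b * (b ^ (1 / (2 * α - 1)) - b) := by
  have e1 : (b ^ (1 / (2 * α - 1))) ^ (2 * α - 1) = b := by
    rw [← rpow_mul hb.le, one_div_mul_cancel hα, rpow_one]
  have e2 : (b ^ (1 / (2 * α - 1))) ^ (2 * α) = b * b ^ (1 / (2 * α - 1)) := by
    rw [← rpow_mul hb.le, show 1 / (2 * α - 1) * (2 * α) = 1 + 1 / (2 * α - 1) by field_simp; ring,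
      rpow_add hb, rpow_one]
  rw [mixedNumerator, e1, e2]
  ring

lemma strictAntiOn_mixedNumerator (hb : 0 < b) (hα : α < 0) :
    StrictAntiOn (mixedNumerator b α) (Ioi 0) := by
  intro z hz w _ hzw
  have h1 := rpow_lt_rpow_of_neg hz hzw (show 2 * α - 1 < 0 by linarith)
  have h2 := rpow_lt_rpow_of_neg hz hzw (show 2 * α < 0 by linarith)
  have hαb : α * b < 0 := mul_neg_of_neg_of_pos hα hb
  unfold mixedNumerator
  nlinarith [mul_lt_mul_of_neg_left hzw hαb, mul_lt_mul_of_neg_left h1 hαb,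
    mul_lt_mul_of_pos_left h2 (show 0 < 1 - α by linarith)]

lemma strictMonoOn_mixedNumerator (hb : 0 < b) (hα₀ : 0 < α) (hα : α < 1 / 2) :
    StrictMonoOn (mixedNumerator b α) (Ioi 0) := by
  intro z hz w _ hzw
  have h1 := rpow_lt_rpow_of_neg hz hzw (show 2 * α - 1 < 0 by linarith)
  have h2 := rpow_lt_rpow hz.le hzw (show 0 < 2 * α by linarith)
  have hαb : 0 < α * b := mul_pos hα₀ hb
  unfold mixedNumerator
  nlinarith [mul_lt_mul_of_pos_left hzw hαb, mul_lt_mul_of_pos_left h1 hαb,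
    mul_lt_mul_of_pos_left h2 (show 0 < 1 - α by linarith)]

lemma strictConvexOn_mixedNumerator (hb : 0 < b) (hα₀ : 1 / 2 < α) (hα : α < 1) :
    StrictConvexOn ℝ (Ioi 0) (mixedNumerator b α) := by
  refine StrictMonoOn.strictConvexOn_of_deriv (convex_Ioi 0) (continuousOn_mixedNumerator b α) ?_
  rw [interior_Ioi]
  intro z hz w hw hzw
  rw [(hasDerivAt_mixedNumerator b α hz).deriv, (hasDerivAt_mixedNumerator b α hw).deriv]
  have h1 := rpow_lt_rpow_of_neg hz hzw (show 2 * α - 2 < 0 by linarith)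
  have h2 := rpow_lt_rpow (le_of_lt hz) hzw (show 0 < 2 * α - 1 by linarith)
  have hc₁ : 0 < α * b * (2 * α - 1) := mul_pos (mul_pos (by linarith) hb) (by linarith)
  have hc₂ : 0 < 2 * α * (1 - α) := mul_pos (by linarith) (by linarith)
  nlinarith [mul_lt_mul_of_pos_left h1 hc₁, mul_lt_mul_of_pos_left h2 hc₂]

lemma strictConcaveOn_mixedNumerator (hb : 0 < b) (hα : 1 < α) :
    StrictConcaveOn ℝ (Ioi 0) (mixedNumerator b α) := by
  refine StrictAntiOn.strictConcaveOn_of_deriv (convex_Ioi 0) (continuousOn_mixedNumerator b α) ?_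
  rw [interior_Ioi]
  intro z hz w hw hzw
  rw [(hasDerivAt_mixedNumerator b α hz).deriv, (hasDerivAt_mixedNumerator b α hw).deriv]
  have h1 := rpow_lt_rpow (le_of_lt hz) hzw (show 0 < 2 * α - 2 by linarith)
  have h2 := rpow_lt_rpow (le_of_lt hz) hzw (show 0 < 2 * α - 1 by linarith)
  have hc₁ : 0 < α * b * (2 * α - 1) := mul_pos (mul_pos (by linarith) hb) (by linarith)
  have hc₂ : 0 < 2 * α * (α - 1) := mul_pos (by linarith) (by linarith)
  nlinarith [mul_lt_mul_of_pos_left h1 hc₁, mul_lt_mul_of_pos_left h2 hc₂]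

lemma mixedNumerator_neg_of_le_one (hb : 1 < b) (hα₀ : 0 < α) (hα : α < 1) {z : ℝ}
    (hz : 0 < z) (hz1 : z ≤ 1) : mixedNumerator b α z < 0 := by
  have h1 : z ≤ z ^ (2 * α - 1) := by
    simpa using rpow_le_rpow_of_exponent_ge hz hz1 (show 2 * α - 1 ≤ 1 by linarith)
  have h2 : z ^ (2 * α) ≤ 1 := rpow_le_one hz.le hz1 (by linarith)
  unfold mixedNumerator
  nlinarith [mul_le_mul_of_nonneg_left h1 (by positivity : 0 ≤ α * b),
    mul_lt_mul_of_pos_left (show z ^ (2 * α) < b ^ 2 by nlinarith) (show 0 < 1 - α by linarith)]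

lemma mixedNumerator_pos_of_le_one (hb : 1 < b) (hα : 1 < α) {z : ℝ}
    (hz : 0 < z) (hz1 : z ≤ 1) : 0 < mixedNumerator b α z := by
  have h1 : z ^ (2 * α - 1) ≤ z := by
    simpa using rpow_le_rpow_of_exponent_ge hz hz1 (show 1 ≤ 2 * α - 1 by linarith)
  have h2 : z ^ (2 * α) ≤ 1 := rpow_le_one hz.le hz1 (by linarith)
  unfold mixedNumerator
  nlinarith [mul_le_mul_of_nonneg_left h1 (by positivity : 0 ≤ α * b),
    mul_lt_mul_of_pos_left (show z ^ (2 * α) < b ^ 2 by nlinarith) (show 0 < α - 1 by linarith)]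

end MixedNumerator

section Gmix

lemma mem_Ioo_union_Ioi_iff {z : ℝ} : z ∈ Ioo 0 1 ∪ Ioi 1 ↔ 0 < z ∧ z ≠ 1 := by
  simp only [mem_union, mem_Ioo, mem_Ioi]
  constructor
  · rintro (⟨h0, h1⟩ | h1)
    exacts [⟨h0, h1.ne⟩, ⟨one_pos.trans h1, h1.ne'⟩]
  · rintro ⟨h0, h1⟩
    exact h1.lt_or_gt.imp (fun h => ⟨h0, h⟩) id

lemma natCast_sub_one_add_ne_zero (n : ℕ) {z : ℝ} (hz : 0 < z) (hz1 : z ≠ 1) :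
    (n : ℝ) - 1 + z ≠ 0 := by
  rcases n with _ | n
  · simpa [neg_add_eq_sub, sub_eq_zero] using hz1
  · push_cast
    linarith [n.cast_nonneg (α := ℝ)]

lemma deriv_gZ_alpha (n : ℕ) {z : ℝ} (hz : 0 < z) (hz1 : z ≠ 1) (α : ℝ) :
    deriv (fun a => gZ n z a) α =
      1 - (((n : ℝ) - 1) * z ^ (1 - α) + z ^ α) / ((n : ℝ) - 1 + z) := by
  have hlog : log z ≠ 0 := log_ne_zero_of_pos_of_ne_one hz hz1
  have hbz := natCast_sub_one_add_ne_zero n hz hz1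
  have hD : HasDerivAt (fun a => gZ n z a)
      (1 + ((z ^ α * log z) * (z ^ (1 - α) - 1)
        + ((n : ℝ) - 1 + z ^ α) * (-(z ^ (1 - α) * log z))) / (((n : ℝ) - 1 + z) * log z)) α :=
    ((hasDerivAt_id α).sub_const 1).add
      ((((hasStrictDerivAt_const_rpow hz α).hasDerivAt.const_add _).mul
        ((hasDerivAt_const_rpow_one_sub hz α).sub_const 1)).div_const _)
  rw [hD.deriv]
  field_simp
  ring

lemma hasDerivAt_one_sub_div (b α : ℝ) {z : ℝ} (hz : 0 < z) (hbz : b + z ≠ 0) :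
    HasDerivAt (fun z => 1 - (b * z ^ (1 - α) + z ^ α) / (b + z))
      (z ^ (-α) / (b + z) ^ 2 * mixedNumerator b α z) z := by
  have hN : HasDerivAt (fun z => b * z ^ (1 - α) + z ^ α)
      (b * ((1 - α) * z ^ (1 - α - 1)) + α * z ^ (α - 1)) z :=
    ((hasDerivAt_rpow_const (Or.inl hz.ne')).const_mul b).add
      (hasDerivAt_rpow_const (Or.inl hz.ne'))
  refine ((hN.div ((hasDerivAt_id' z).const_add b) hbz).const_sub 1).congr_deriv ?_
  have e1 : z ^ (1 - α) = z / z ^ α := by rw [rpow_sub hz, rpow_one]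
  have e2 : z ^ (α - 1) = z ^ α / z := by rw [rpow_sub hz, rpow_one]
  have e3 : z ^ (2 * α) = z ^ α * z ^ α := by rw [two_mul, rpow_add hz]
  have e4 : z ^ (2 * α - 1) = z ^ α * z ^ α / z := by rw [rpow_sub hz, rpow_one, e3]
  rw [mixedNumerator, show 1 - α - 1 = -α by ring, rpow_neg hz.le, e1, e2, e3, e4]
  field_simp
  ring

lemma Gmix_eq (n : ℕ) (α : ℝ) {z : ℝ} (hz : z ∈ Ioo 0 1 ∪ Ioi 1) :
    Gmix n z α = z ^ (-α) / ((n : ℝ) - 1 + z) ^ 2 * mixedNumerator ((n : ℝ) - 1) α z := by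
  have hev : (fun z' => deriv (fun a => gZ n z' a) α) =ᶠ[nhds z]
      fun z' => 1 - (((n : ℝ) - 1) * z' ^ (1 - α) + z' ^ α) / ((n : ℝ) - 1 + z') := by
    filter_upwards [(isOpen_Ioo.union isOpen_Ioi).mem_nhds hz] with z' hz'
    obtain ⟨hz'0, hz'1⟩ := mem_Ioo_union_Ioi_iff.1 hz'
    exact deriv_gZ_alpha n hz'0 hz'1 α
  obtain ⟨hz0, hz1⟩ := mem_Ioo_union_Ioi_iff.1 hz
  rw [Gmix, hev.deriv_eq,
    (hasDerivAt_one_sub_div _ α hz0 (natCast_sub_one_add_ne_zero n hz0 hz1)).deriv]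

lemma Gmix_factor_pos (n : ℕ) (α : ℝ) {z : ℝ} (hz : z ∈ Ioo 0 1 ∪ Ioi 1) :
    0 < z ^ (-α) / ((n : ℝ) - 1 + z) ^ 2 := by
  obtain ⟨hz0, hz1⟩ := mem_Ioo_union_Ioi_iff.1 hz
  have := natCast_sub_one_add_ne_zero n hz0 hz1
  exact div_pos (rpow_pos_of_pos hz0 _) (by positivity)

variable {n : ℕ} {α γ : ℝ}

lemma signChangesUpAt_Gmix (h : SignChangesUpAt (mixedNumerator ((n : ℝ) - 1) α) (Ioi 0) γ)
    (hγ : γ ∈ Ioo 0 1 ∪ Ioi 1) :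
    SignChangesUpAt (fun z => Gmix n z α) (Ioo 0 1 ∪ Ioi 1) γ :=
  h.of_pos_mul (fun _ hz => (mem_Ioo_union_Ioi_iff.1 hz).1) hγ
    (fun _ hz => Gmix_factor_pos n α hz) (fun _ hz => Gmix_eq n α hz)

lemma signChangesUpAt_neg_Gmix (h : SignChangesUpAt (-mixedNumerator ((n : ℝ) - 1) α) (Ioi 0) γ)
    (hγ : γ ∈ Ioo 0 1 ∪ Ioi 1) :
    SignChangesUpAt (fun z => -Gmix n z α) (Ioo 0 1 ∪ Ioi 1) γ :=
  h.of_pos_mul (fun _ hz => (mem_Ioo_union_Ioi_iff.1 hz).1) hγ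
    (fun _ hz => Gmix_factor_pos n α hz) (fun _ hz => by rw [Gmix_eq n α hz, Pi.neg_apply, mul_neg])

end Gmix

section Cases

variable {b α : ℝ}

lemma exists_signChange_mixedNumerator_of_neg (hb : 1 < b) (hα : α < 0) :
    ∃ γ ∈ Ioo (b ^ (1 / (2 * α))) (b ^ (1 / (2 * α - 1))),
      γ ∈ Ioo 0 1 ∪ Ioi 1 ∧ SignChangesUpAt (-mixedNumerator b α) (Ioi 0) γ := by
  have hb0 : 0 < b := by linarith
  have ht : 1 / (2 * α) < 0 := by rw [one_div_neg]; linarith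
  have hz₁ : 0 < b ^ (1 / (2 * α)) := rpow_pos_of_pos hb0 _
  have hz₁₂ : b ^ (1 / (2 * α)) < b ^ (1 / (2 * α - 1)) :=
    rpow_lt_rpow_of_exponent_lt hb (one_div_lt_one_div_of_neg_of_lt (by linarith) (by linarith))
  have hz₂ : b ^ (1 / (2 * α - 1)) < 1 :=
    rpow_lt_one_of_one_lt_of_neg hb (by rw [one_div_neg]; linarith)
  have hF₁ : 0 < mixedNumerator b α (b ^ (1 / (2 * α))) := by
    rw [mixedNumerator_rpow_one_div_two_mul hb0 hα.ne]
    exact mul_pos_of_neg_of_neg (mul_neg_of_neg_of_pos hα hb0) (chordGap_neg_of_neg hb ht)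
  have hF₂ : mixedNumerator b α (b ^ (1 / (2 * α - 1))) < 0 := by
    rw [mixedNumerator_rpow_one_div_two_mul_sub_one hb0 (by linarith)]
    exact mul_neg_of_pos_of_neg hb0 (by linarith)
  obtain ⟨γ, hγ, h0⟩ := intermediate_value_Ioo' hz₁₂.le
    ((continuousOn_mixedNumerator b α).mono fun _ hz => hz₁.trans_le hz.1) ⟨hF₂, hF₁⟩
  have hγ0 : 0 < γ := hz₁.trans hγ.1
  exact ⟨γ, hγ, Or.inl ⟨hγ0, hγ.2.trans hz₂⟩,
    (strictAntiOn_mixedNumerator hb0 hα).neg.signChangesUpAt hγ0 (by simp [h0])⟩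

lemma exists_signChange_mixedNumerator_of_lt_half (hb : 1 < b) (hα₀ : 0 < α) (hα : α < 1 / 2) :
    ∃ γ ∈ Ioo b (b ^ (1 / (2 * α))),
      γ ∈ Ioo 0 1 ∪ Ioi 1 ∧ SignChangesUpAt (mixedNumerator b α) (Ioi 0) γ := by
  have hb0 : 0 < b := by linarith
  have ht : 1 < 1 / (2 * α) := by rw [lt_one_div one_pos (by linarith)]; linarith
  have hbz₁ : b < b ^ (1 / (2 * α)) := by
    simpa using rpow_lt_rpow_of_exponent_lt hb ht
  have hFb : mixedNumerator b α b < 0 := by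
    rw [mixedNumerator_self hb0]
    have : b ^ (2 * α) < b ^ 2 := by
      simpa using rpow_lt_rpow_of_exponent_lt hb (show 2 * α < 2 by linarith)
    exact mul_neg_of_neg_of_pos (by linarith) (by linarith)
  have hF₁ : 0 < mixedNumerator b α (b ^ (1 / (2 * α))) := by
    rw [mixedNumerator_rpow_one_div_two_mul hb0 hα₀.ne']
    exact mul_pos (mul_pos hα₀ hb0) (chordGap_pos_of_one_lt hb ht)
  obtain ⟨γ, hγ, h0⟩ := intermediate_value_Ioo hbz₁.le
    ((continuousOn_mixedNumerator b α).mono fun _ hz => hb0.trans_le hz.1) ⟨hFb, hF₁⟩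
  exact ⟨γ, hγ, Or.inr (hb.trans hγ.1),
    (strictMonoOn_mixedNumerator hb0 hα₀ hα).signChangesUpAt (hb0.trans hγ.1) h0⟩

lemma exists_signChange_mixedNumerator_of_half_lt (hb : 1 < b) (hα₀ : 1 / 2 < α) (hα : α < 1) :
    ∃ γ ∈ Ioo (b ^ (1 / (2 * α))) b,
      γ ∈ Ioo 0 1 ∪ Ioi 1 ∧ SignChangesUpAt (mixedNumerator b α) (Ioi 0) γ := by
  have hb0 : 0 < b := by linarith
  have ht₀ : 1 / 2 < 1 / (2 * α) := one_div_lt_one_div_of_lt (by linarith) (by linarith)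
  have ht₁ : 1 / (2 * α) < 1 := by rw [div_lt_one (by linarith)]; linarith
  have hz₁ : 1 < b ^ (1 / (2 * α)) := one_lt_rpow hb (by linarith)
  have hz₁b : b ^ (1 / (2 * α)) < b := by
    simpa using rpow_lt_rpow_of_exponent_lt hb ht₁
  have hF₁ : mixedNumerator b α (b ^ (1 / (2 * α))) < 0 := by
    rw [mixedNumerator_rpow_one_div_two_mul hb0 (by linarith)]
    exact mul_neg_of_pos_of_neg (mul_pos (by linarith) hb0) (chordGap_neg_of_half_lt hb ht₀ ht₁)
  have hFb : 0 < mixedNumerator b α b := by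
    rw [mixedNumerator_self hb0]
    have : b ^ (2 * α) < b ^ 2 := by
      simpa using rpow_lt_rpow_of_exponent_lt hb (show 2 * α < 2 by linarith)
    exact mul_pos (by linarith) (by linarith)
  obtain ⟨γ, hγ, h0⟩ := intermediate_value_Ioo hz₁b.le
    ((continuousOn_mixedNumerator b α).mono fun _ hz => one_pos.trans (hz₁.trans_le hz.1))
    ⟨hF₁, hFb⟩
  have hγ1 : 1 < γ := hz₁.trans hγ.1
  exact ⟨γ, hγ, Or.inr hγ1, (strictConvexOn_mixedNumerator hb0 hα₀ hα).signChangesUpAt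
    (mem_Ioi.2 one_pos) (mem_Ioi.2 (one_pos.trans hγ1)) hγ1
    (fun z hz hz1 => mixedNumerator_neg_of_le_one hb (by linarith) hα hz hz1) h0⟩

lemma exists_signChange_mixedNumerator_of_one_lt (hb : 1 < b) (hα : 1 < α) :
    ∃ γ ∈ Ioo (b ^ (1 / (2 * α))) (b ^ (1 / (2 * α - 1))),
      γ ∈ Ioo 0 1 ∪ Ioi 1 ∧ SignChangesUpAt (-mixedNumerator b α) (Ioi 0) γ := by
  have hb0 : 0 < b := by linarith
  have ht₀ : 0 < 1 / (2 * α) := by positivity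
  have ht : 1 / (2 * α) < 1 / 2 := one_div_lt_one_div_of_lt (by norm_num) (by linarith)
  have hz₁ : 1 < b ^ (1 / (2 * α)) := one_lt_rpow hb ht₀
  have hz₁₂ : b ^ (1 / (2 * α)) < b ^ (1 / (2 * α - 1)) :=
    rpow_lt_rpow_of_exponent_lt hb (one_div_lt_one_div_of_lt (by linarith) (by linarith))
  have hz₂ : b ^ (1 / (2 * α - 1)) < b := by
    simpa using rpow_lt_rpow_of_exponent_lt hb
      (show 1 / (2 * α - 1) < 1 by rw [div_lt_one (by linarith)]; linarith)
  have hF₁ : 0 < mixedNumerator b α (b ^ (1 / (2 * α))) := by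
    rw [mixedNumerator_rpow_one_div_two_mul hb0 (by linarith)]
    exact mul_pos (mul_pos (by linarith) hb0) (chordGap_pos hb ht₀ ht)
  have hF₂ : mixedNumerator b α (b ^ (1 / (2 * α - 1))) < 0 := by
    rw [mixedNumerator_rpow_one_div_two_mul_sub_one hb0 (by linarith)]
    exact mul_neg_of_pos_of_neg hb0 (by linarith)
  obtain ⟨γ, hγ, h0⟩ := intermediate_value_Ioo' hz₁₂.le
    ((continuousOn_mixedNumerator b α).mono fun _ hz => one_pos.trans (hz₁.trans_le hz.1))
    ⟨hF₂, hF₁⟩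
  have hγ1 : 1 < γ := hz₁.trans hγ.1
  exact ⟨γ, hγ, Or.inr hγ1, (strictConcaveOn_mixedNumerator hb0 hα).neg.signChangesUpAt
    (mem_Ioi.2 one_pos) (mem_Ioi.2 (one_pos.trans hγ1)) hγ1
    (fun z hz hz1 => neg_lt_zero.2 (mixedNumerator_pos_of_le_one hb hα hz hz1)) (by simp [h0])⟩

lemma signChangesUpAt_mixedNumerator_half (hb : 0 < b) :
    SignChangesUpAt (mixedNumerator b (1 / 2)) (Ioi 0) b := by
  refine StrictMonoOn.signChangesUpAt (fun z _ w _ hzw => ?_) hb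
    (by rw [mixedNumerator_half, sub_self, mul_zero])
  simp only [mixedNumerator_half]
  nlinarith

end Cases

theorem stmt17 (n : ℕ) (hn : 3 ≤ n) :
    (∀ α : ℝ, α < 0 →
      ∃ γ ∈ Set.Ioo (((n : ℝ) - 1) ^ (1 / (2 * α))) (((n : ℝ) - 1) ^ (1 / (2 * α - 1))),
        (∀ z ∈ Set.Ioo (0 : ℝ) 1 ∪ Set.Ioi 1, z < γ → 0 < Gmix n z α) ∧
        Gmix n γ α = 0 ∧
        (∀ z ∈ Set.Ioo (0 : ℝ) 1 ∪ Set.Ioi 1, γ < z → Gmix n z α < 0)) ∧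
    (∀ z ∈ Set.Ioo (0 : ℝ) 1 ∪ Set.Ioi 1, Gmix n z 0 < 0) ∧
    (∀ α ∈ Set.Ioo (0 : ℝ) (1 / 2),
      ∃ γ ∈ Set.Ioo ((n : ℝ) - 1) (((n : ℝ) - 1) ^ (1 / (2 * α))),
        (∀ z ∈ Set.Ioo (0 : ℝ) 1 ∪ Set.Ioi 1, z < γ → Gmix n z α < 0) ∧
        Gmix n γ α = 0 ∧
        (∀ z ∈ Set.Ioo (0 : ℝ) 1 ∪ Set.Ioi 1, γ < z → 0 < Gmix n z α)) ∧
    ((∀ z ∈ Set.Ioo (0 : ℝ) 1 ∪ Set.Ioi 1, z < (n : ℝ) - 1 → Gmix n z (1 / 2) < 0) ∧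
      Gmix n ((n : ℝ) - 1) (1 / 2) = 0 ∧
      (∀ z ∈ Set.Ioo (0 : ℝ) 1 ∪ Set.Ioi 1, (n : ℝ) - 1 < z → 0 < Gmix n z (1 / 2))) ∧
    (∀ α ∈ Set.Ioo (1 / 2 : ℝ) 1,
      ∃ γ ∈ Set.Ioo (((n : ℝ) - 1) ^ (1 / (2 * α))) ((n : ℝ) - 1),
        (∀ z ∈ Set.Ioo (0 : ℝ) 1 ∪ Set.Ioi 1, z < γ → Gmix n z α < 0) ∧
        Gmix n γ α = 0 ∧
        (∀ z ∈ Set.Ioo (0 : ℝ) 1 ∪ Set.Ioi 1, γ < z → 0 < Gmix n z α)) ∧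
    (∀ z ∈ Set.Ioo (0 : ℝ) 1 ∪ Set.Ioi 1, Gmix n z 1 = 0) ∧
    (∀ α : ℝ, 1 < α →
      ∃ γ ∈ Set.Ioo (((n : ℝ) - 1) ^ (1 / (2 * α))) (((n : ℝ) - 1) ^ (1 / (2 * α - 1))),
        (∀ z ∈ Set.Ioo (0 : ℝ) 1 ∪ Set.Ioi 1, z < γ → 0 < Gmix n z α) ∧
        Gmix n γ α = 0 ∧
        (∀ z ∈ Set.Ioo (0 : ℝ) 1 ∪ Set.Ioi 1, γ < z → Gmix n z α < 0)) := by
  have hb : (1 : ℝ) < n - 1 := by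
    have : (3 : ℝ) ≤ n := by exact_mod_cast hn
    linarith
  refine ⟨fun α hα => ?_, fun z hz => ?_, fun α hα => ?_, ?_, fun α hα => ?_, fun z hz => ?_,
    fun α hα => ?_⟩
  · obtain ⟨γ, hγ, hγD, h⟩ := exists_signChange_mixedNumerator_of_neg hb hα
    exact ⟨γ, hγ, signChangesUpAt_neg_iff.1 (signChangesUpAt_neg_Gmix h hγD)⟩
  · rw [Gmix_eq n 0 hz, mixedNumerator_zero]
    exact mul_neg_of_pos_of_neg (Gmix_factor_pos n 0 hz) (by nlinarith)
  · obtain ⟨γ, hγ, hγD, h⟩ := exists_signChange_mixedNumerator_of_lt_half hb hα.1 hα.2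
    exact ⟨γ, hγ, signChangesUpAt_Gmix h hγD⟩
  · exact signChangesUpAt_Gmix (signChangesUpAt_mixedNumerator_half (by linarith)) (Or.inr hb)
  · obtain ⟨γ, hγ, hγD, h⟩ := exists_signChange_mixedNumerator_of_half_lt hb hα.1 hα.2
    exact ⟨γ, hγ, signChangesUpAt_Gmix h hγD⟩
  · rw [Gmix_eq n 1 hz, mixedNumerator_one, mul_zero]
  · obtain ⟨γ, hγ, hγD, h⟩ := exists_signChange_mixedNumerator_of_one_lt hb hα
    exact ⟨γ, hγ, signChangesUpAt_neg_iff.1 (signChangesUpAt_neg_Gmix h hγD)⟩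
end

section
/- Fix an integer n ≥ 3. For every z ∈ (1, ∞): the partial derivative of g(n, ·, α) with respect to z, evaluated at α = 1, equals 0; and the partial derivative of g(n, ·, α) with respect to z, evaluated at α = ln(n−1)/ln z, equals 0 if z = n−1 and is strictly negative if z ≠ n−1. -/
/-!
At `α = 1` the function `g(n, ·, 1)` vanishes identically. For `α = log c / log z` with
`c = n - 1` one has `z ^ α = c`, and the quotient rule gives
`∂_z g = -(log c (z + c)² + 2 (z² - c²) - 4 c z log z) / (z ((c + z) log z)²)`.
For `z ≠ c` the numerator is positive: with `t = z / c` this reduces to the geometric–logarithmic mean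
inequality `log t < (t - t⁻¹) / 2` when `t > 1`, and the logarithmic–arithmetic mean inequality
`2 (s - 1) / (s + 1) < log s` for `s = c / z` when `t < 1`.
-/

open Real

namespace Real

theorem log_lt_sub_inv_div_two {t : ℝ} (ht : 1 < t) : log t < (t - t⁻¹) / 2 := by
  rw [← sinh_log (by linarith)]
  exact self_lt_sinh_iff.2 (log_pos ht)

theorem two_mul_sub_one_div_add_one_lt_log {t : ℝ} (ht : 1 < t) :
    2 * (t - 1) / (t + 1) < log t := by
  have ht1 : 0 < t - 1 := by linarith
  have hsum := sum_le_hasSum (Finset.range 2) (fun k _ => by positivity)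
    (hasSum_log_one_add_inv (inv_pos.2 ht1))
  have hx : 1 / (2 * (t - 1)⁻¹ + 1) = (t - 1) / (t + 1) := by
    field_simp
    ring
  rw [inv_inv, add_sub_cancel, Finset.sum_range_succ, Finset.sum_range_one, hx] at hsum
  have hcube : 0 < ((t - 1) / (t + 1)) ^ 3 := by positivity
  norm_num at hsum
  rw [mul_div_assoc]
  linarith

end Real

theorem four_mul_mul_log_lt {c z : ℝ} (hc : 1 ≤ c) (hz : 1 ≤ z) (hcz : c ≠ z) :
    4 * c * z * log z < log c * (z + c) ^ 2 + 2 * (z ^ 2 - c ^ 2) := by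
  have hc0 : 0 < c := by linarith
  have hz0 : 0 < z := by linarith
  have hlogc := log_nonneg hc
  have hlogz := log_nonneg hz
  rcases hcz.lt_or_gt with hlt | hgt
  · have h := log_lt_sub_inv_div_two ((one_lt_div hc0).2 hlt)
    rw [log_div hz0.ne' hc0.ne', inv_div, div_sub_div _ _ hc0.ne' hz0.ne', div_div,
      lt_div_iff₀ (by positivity)] at h
    nlinarith [mul_nonneg hlogc (sq_nonneg (z - c))]
  · have h := two_mul_sub_one_div_add_one_lt_log ((one_lt_div hz0).2 hgt)
    have e : 2 * (c / z - 1) / (c / z + 1) = 2 * (c - z) / (c + z) := by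
      field_simp
    rw [e, log_div hc0.ne' hz0.ne', div_lt_iff₀ (by positivity)] at h
    nlinarith [mul_nonneg hlogz (sq_nonneg (z - c))]

theorem gZ_one (n : ℕ) (z : ℝ) : gZ n z 1 = 0 := by
  simp [gZ]

theorem hasDerivAt_gZ_of_rpow_eq {n : ℕ} {z α : ℝ} (hz : 0 < z) (hz1 : z ≠ 1)
    (hα : z ^ α = (n : ℝ) - 1) :
    HasDerivAt (fun z' => gZ n z' α)
      (-(log ((n : ℝ) - 1) * (z + ((n : ℝ) - 1)) ^ 2 + 2 * (z ^ 2 - ((n : ℝ) - 1) ^ 2)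
        - 4 * ((n : ℝ) - 1) * z * log z) / (z * ((((n : ℝ) - 1) + z) * log z) ^ 2)) z := by
  set c : ℝ := (n : ℝ) - 1
  change HasDerivAt (fun z' => α - 1 + (c + z' ^ α) * (z' ^ (1 - α) - 1) / ((c + z') * log z')) _ z
  clear_value c
  have hc : 0 < c := hα ▸ rpow_pos_of_pos hz α
  have hlog : α * log z = log c := by rw [← log_rpow hz, hα]
  have hL : log z ≠ 0 := log_ne_zero_of_pos_of_ne_one hz hz1
  have hN : HasDerivAt (fun z' => (c + z' ^ α) * (z' ^ (1 - α) - 1))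
      (α * z ^ (α - 1) * (z ^ (1 - α) - 1) + (c + z ^ α) * ((1 - α) * z ^ (1 - α - 1))) z :=
    ((hasDerivAt_rpow_const (Or.inl hz.ne')).const_add c).mul
      ((hasDerivAt_rpow_const (Or.inl hz.ne')).sub_const 1)
  have hD : HasDerivAt (fun z' => (c + z') * log z') (1 * log z + (c + z) * z⁻¹) z :=
    ((hasDerivAt_id z).const_add c).mul (hasDerivAt_log hz.ne')
  refine ((hN.div hD (by positivity)).const_add (α - 1)).congr_deriv ?_
  have h1 : z ^ (1 - α) = z / c := by rw [rpow_sub hz, rpow_one, hα]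
  have h2 : z ^ (α - 1) = c / z := by rw [rpow_sub hz, rpow_one, hα]
  have h3 : z ^ (1 - α - 1) = c⁻¹ := by rw [sub_sub_cancel_left, rpow_neg hz.le, hα]
  rw [h1, h2, h3, hα]
  field_simp
  linear_combination -(z + c) ^ 2 * hlog

theorem stmt18 (n : ℕ) (hn : 3 ≤ n) (z : ℝ) (hz : 1 < z) :
    deriv (fun z' => gZ n z' 1) z = 0 ∧
    (z = (n : ℝ) - 1 →
      deriv (fun z' => gZ n z' (Real.log ((n : ℝ) - 1) / Real.log z)) z = 0) ∧
    (z ≠ (n : ℝ) - 1 →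
      deriv (fun z' => gZ n z' (Real.log ((n : ℝ) - 1) / Real.log z)) z < 0) := by
  have hconst : (fun z' => gZ n z' 1) = fun _ => 0 := funext (gZ_one n)
  have hc : (1 : ℝ) < n - 1 := by
    have : (3 : ℝ) ≤ n := by exact_mod_cast hn
    linarith
  refine ⟨by rw [hconst, deriv_const], fun hzc => ?_, fun hzc => ?_⟩
  · rw [← hzc, div_self (log_pos hz).ne', hconst, deriv_const]
  · have hα : z ^ (log ((n : ℝ) - 1) / log z) = n - 1 :=
      rpow_logb (by linarith) hz.ne' (by linarith)
    rw [(hasDerivAt_gZ_of_rpow_eq (by linarith) hz.ne' hα).deriv]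
    have hnum := four_mul_mul_log_lt hc.le hz.le (Ne.symm hzc)
    exact div_neg_of_neg_of_pos (by linarith)
      (mul_pos (by linarith) (pow_pos (mul_pos (by linarith) (log_pos hz)) 2))
end

section
/- For every integer n ≥ 3 and every z ∈ [n−1, (n−1)²], one has g(n, z, ln(n−1)/(2·ln z)) > 0. -/
open Real

/-!
The exponent `α` makes `z ^ α = s := √(n - 1)`, and then `g > 0` becomes
`log t < (s + 1)(t - 1)/(s + t)` for `t = z ^ (1 - α) = z / s ∈ [s, s³]`. The right-hand side
increases with `s`, so it suffices to take `s = ∛t`, where the inequality reads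
`3 log r < (r + 1)(r³ - 1)/(r + r³)`, i.e. `3y < 2 sinh y + tanh y` for `y = log r`. This is tight
to fifth order at `r = 1`; the derivative of the difference is a positive multiple of `(r - 1)⁴`.
-/

lemma hasDerivAt_log_cube_bound {x : ℝ} (hx : 0 < x) :
    HasDerivAt (fun x => (x + 1) * (x ^ 3 - 1) / (x + x ^ 3) - 3 * log x)
      ((x ^ 2 + x + 1) * (x - 1) ^ 4 / (x + x ^ 3) ^ 2) x := by
  have hnum : HasDerivAt (fun x : ℝ => (x + 1) * (x ^ 3 - 1))
      (1 * (x ^ 3 - 1) + (x + 1) * (3 * x ^ 2)) x := by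
    simpa using ((hasDerivAt_id' x).add_const 1).fun_mul ((hasDerivAt_pow 3 x).sub_const 1)
  have hden : HasDerivAt (fun x : ℝ => x + x ^ 3) (1 + 3 * x ^ 2) x :=
    (hasDerivAt_id' x).add (hasDerivAt_pow 3 x)
  refine ((hnum.div hden (by positivity)).sub
    ((hasDerivAt_log hx.ne').const_mul 3)).congr_deriv ?_
  field_simp
  ring

lemma three_mul_log_lt {r : ℝ} (hr : 1 < r) :
    3 * log r < (r + 1) * (r ^ 3 - 1) / (r + r ^ 3) := by
  set F : ℝ → ℝ := fun x => (x + 1) * (x ^ 3 - 1) / (x + x ^ 3) - 3 * log x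
  have hF : StrictMonoOn F (Set.Ici 1) := by
    refine strictMonoOn_of_deriv_pos (convex_Ici 1)
      (fun x hx => (hasDerivAt_log_cube_bound
        (zero_lt_one.trans_le hx)).continuousAt.continuousWithinAt) fun x hx => ?_
    rw [interior_Ici] at hx
    have hx1 : 1 < x := hx
    rw [(hasDerivAt_log_cube_bound (zero_lt_one.trans hx1)).deriv]
    have : 0 < (x - 1) ^ 4 := by positivity
    positivity
  have hF1r : F 1 < F r := hF Set.self_mem_Ici hr.le hr
  norm_num [F] at hF1r
  linarith

lemma log_lt_add_one_mul_sub_one_div_add {s t : ℝ} (ht : 1 < t) (hts : t ≤ s ^ 3) :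
    log t < (s + 1) * (t - 1) / (s + t) := by
  set r := t ^ (3⁻¹ : ℝ)
  have hr3 : r ^ 3 = t := by simpa using rpow_inv_natCast_pow (n := 3) (by linarith) (by norm_num)
  have hr1 : 1 < r := one_lt_rpow ht (by norm_num)
  have hrs : r ≤ s := by
    have hs : 0 ≤ s := ((Odd.pow_pos_iff (n := 3) (by decide)).mp (by linarith)).le
    exact (pow_le_pow_iff_left₀ (by linarith) hs (by norm_num)).mp (hr3 ▸ hts)
  calc log t = 3 * log r := by rw [← hr3, log_pow]; norm_num
    _ < (r + 1) * (t - 1) / (r + t) := hr3 ▸ three_mul_log_lt hr1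
    _ ≤ (s + 1) * (t - 1) / (s + t) := by
      rw [div_le_div_iff₀ (by linarith) (by linarith)]
      nlinarith [mul_nonneg (sub_nonneg.mpr hrs) (sub_nonneg.mpr ht.le)]

lemma gZ_pos_of_lt {n : ℕ} {z α : ℝ} (hz : 1 < z)
    (h : (1 - α) * log z < ((n - 1) + z ^ α) * (z ^ (1 - α) - 1) / ((n - 1) + z)) :
    0 < gZ n z α := by
  have hlog : 0 < log z := log_pos hz
  rw [gZ, div_mul_eq_div_div]
  have := (lt_div_iff₀ hlog).mpr (by rwa [mul_comm] at h)
  linarith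

theorem stmt19 (n : ℕ) (hn : 3 ≤ n) (z : ℝ)
    (hz : z ∈ Set.Icc ((n : ℝ) - 1) (((n : ℝ) - 1) ^ 2)) :
    0 < gZ n z (Real.log ((n : ℝ) - 1) / (2 * Real.log z)) := by
  obtain ⟨hz₁, hz₂⟩ := hz
  have hm : (2 : ℝ) ≤ n - 1 := by
    have : (3 : ℝ) ≤ n := by exact_mod_cast hn
    linarith
  set s := √((n : ℝ) - 1)
  have hs2 : s ^ 2 = n - 1 := sq_sqrt (by linarith)
  have hs1 : 1 < s := by nlinarith [sqrt_nonneg ((n : ℝ) - 1)]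
  have hz0 : 0 < z := by linarith
  have hlogz : 0 < log z := log_pos (by linarith)
  set α := log ((n : ℝ) - 1) / (2 * log z)
  have hzα : z ^ α = s := by
    have : log z * α = log ((n : ℝ) - 1) / 2 := by simp only [α]; field_simp
    rw [rpow_def_of_pos hz0, this, ← log_sqrt (by linarith), exp_log (by positivity)]
  have hz1α : z ^ (1 - α) = z / s := by rw [rpow_sub hz0, rpow_one, hzα]
  refine gZ_pos_of_lt (by linarith) ?_
  have key := log_lt_add_one_mul_sub_one_div_add (s := s) (t := z / s)
    ((one_lt_div (by linarith)).mpr (by nlinarith)) ((div_le_iff₀ (by linarith)).mpr (by nlinarith))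
  rw [← hz1α, log_rpow hz0, hz1α] at key
  rw [hzα, hz1α, ← hs2]
  convert key using 1
  field_simp
end
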